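/- arXiv:2108.01128 — 3 statements merged into one kernel-verified Lean document; each statement's English description precedes it below -/
import Mathlib

section
/- Let p₁(t,x) = C_d · t / (t² + |x|²)^{(d+1)/2} be the Poisson kernel on ℝ^d (the heat kernel of ∂_t u + (-Δ)^{1/2} u = 0), where C_d = Γ((d+1)/2)/π^{(d+1)/2}. Then for each fixed x ≠ 0, the function t ↦ p₁(t,x) is real analytic on [0,∞), and for every integer k ≥ 0 there exist constants C₁, C₂ > 0 (depending on d) with |∂_t^k p₁(t,x)| ≤ C₁ C₂^k k^k / |x|^{k+d} for all t ≥ 0 and x ≠ 0. -/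
open Real Set
open scoped Nat

namespace Stmt6Aux

open Complex



/-- The complex extension of the Poisson kernel (as a function of time). -/
noncomputable def F (C e r : ℝ) (z : ℂ) : ℂ := (C : ℂ) * z / (z ^ 2 + (r : ℂ) ^ 2) ^ (e : ℂ)

lemma strip_isOpen (r : ℝ) : IsOpen {z : ℂ | |z.im| < r} :=
  isOpen_lt (continuous_abs.comp Complex.continuous_im) continuous_const

lemma denom_re_pos {r : ℝ} (hr : 0 < r) {z : ℂ} (hz : |z.im| < r) :
    0 < (z ^ 2 + (r : ℂ) ^ 2).re := by
  have h : (z ^ 2 + (r : ℂ) ^ 2).re = z.re ^ 2 - z.im ^ 2 + r ^ 2 := by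
    simp [pow_two, Complex.add_re, Complex.mul_re, Complex.ofReal_re, Complex.ofReal_im]
  rw [h]
  obtain ⟨h1, h2⟩ := abs_lt.mp hz
  nlinarith [sq_nonneg z.re]

lemma F_diffAt {C e r : ℝ} (hr : 0 < r) {z : ℂ} (hz : |z.im| < r) :
    DifferentiableAt ℂ (F C e r) z := by
  have h1 : z ^ 2 + (r : ℂ) ^ 2 ∈ Complex.slitPlane := Or.inl (denom_re_pos hr hz)
  have hne : z ^ 2 + (r : ℂ) ^ 2 ≠ 0 := Complex.slitPlane_ne_zero h1
  have hdenom : DifferentiableAt ℂ (fun z : ℂ => (z ^ 2 + (r : ℂ) ^ 2) ^ (e : ℂ)) z :=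
    DifferentiableAt.cpow ((differentiableAt_id.pow 2).add_const _)
      (differentiableAt_const _) h1
  have hne2 : (z ^ 2 + (r : ℂ) ^ 2) ^ (e : ℂ) ≠ 0 := by
    simp [Complex.cpow_eq_zero_iff, hne]
  exact ((differentiableAt_const _).mul differentiableAt_id).div hdenom hne2

lemma F_analyticOnNhd {C e r : ℝ} (hr : 0 < r) :
    AnalyticOnNhd ℂ (F C e r) {z : ℂ | |z.im| < r} :=
  DifferentiableOn.analyticOnNhd
    (fun z hz => (F_diffAt hr hz).differentiableWithinAt) (strip_isOpen r)

lemma iteratedDeriv_re_comp {r : ℝ} (hr : 0 < r) (k : ℕ) :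
    ∀ G : ℂ → ℂ, AnalyticOnNhd ℂ G {z : ℂ | |z.im| < r} →
      ∀ t : ℝ, iteratedDeriv k (fun s : ℝ => (G ↑s).re) t = (iteratedDeriv k G ↑t).re := by
  induction k with
  | zero => intro G hG t; simp
  | succ k ih =>
    intro G hG t
    rw [iteratedDeriv_succ', iteratedDeriv_succ']
    have h1 : (deriv fun u : ℝ => (G ↑u).re) = fun s : ℝ => (deriv G ↑s).re := by
      funext s
      have hd : DifferentiableAt ℂ G ↑s :=
        (hG ↑s (by simp [Complex.ofReal_im, hr])).differentiableAt
      exact hd.hasDerivAt.real_of_complex.deriv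
    rw [h1]
    exact ih (deriv G) (hG.deriv_of_isOpen (strip_isOpen r)) t




lemma cauchy_bound {M r : ℝ} (hr : 0 < r) {G : ℂ → ℂ}
    (hG : ∀ z : ℂ, |z.im| < r → DifferentiableAt ℂ G z)
    (hbd : ∀ z : ℂ, |z.im| ≤ r / 2 → ‖G z‖ ≤ M) (k : ℕ) (t : ℝ) :
    ‖iteratedDeriv k G ↑t‖ ≤ M * k ! * (2 / r) ^ k := by
  have hM : 0 ≤ M := le_trans (norm_nonneg _) (hbd ↑t (by simp [Complex.ofReal_im]; positivity))
  set R : NNReal := ⟨r / 2, by positivity⟩ with hR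
  have hRr : (R : ℝ) = r / 2 := rfl
  have him : ∀ z ∈ Metric.closedBall (↑t : ℂ) R, |z.im| ≤ r / 2 := by
    intro z hz
    have h1 : |(z - ↑t).im| ≤ ‖z - ↑t‖ := Complex.abs_im_le_norm _
    have h2 : ‖z - ↑t‖ ≤ r / 2 := by
      rw [← Complex.dist_eq]; exact hz
    simpa [Complex.sub_im, Complex.ofReal_im] using h1.trans h2
  have hd : DifferentiableOn ℂ G (Metric.closedBall ↑t R) := fun z hz =>
    (hG z (lt_of_le_of_lt (him z hz) (by linarith))).differentiableWithinAt
  have hRpos : 0 < R := by rw [← NNReal.coe_pos, hRr]; positivity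
  have h := hd.hasFPowerSeriesOnBall hRpos
  -- the coefficient bound
  have hcont : Continuous fun θ : ℝ => ‖G (circleMap (↑t) R θ)‖ := by
    rw [continuous_iff_continuousAt]
    intro θ
    have hmem : circleMap (↑t) (R : ℝ) θ ∈ Metric.closedBall (↑t : ℂ) R :=
      Metric.sphere_subset_closedBall (circleMap_mem_sphere _ R.coe_nonneg _)
    exact continuous_norm.continuousAt.comp
      (((hG _ (lt_of_le_of_lt (him _ hmem) (by linarith))).continuousAt).comp
        (continuous_circleMap _ _).continuousAt)
  have hint : ∫ θ : ℝ in (0)..2 * π, ‖G (circleMap (↑t) R θ)‖ ≤ 2 * π * M := by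
    have h1 : ∫ θ : ℝ in (0)..2 * π, ‖G (circleMap (↑t) R θ)‖ ≤ ∫ _ : ℝ in (0)..2 * π, M := by
      apply intervalIntegral.integral_mono_on Real.two_pi_pos.le
        (hcont.intervalIntegrable _ _) intervalIntegrable_const
      intro θ _
      exact hbd _ (him _ (Metric.sphere_subset_closedBall
        (circleMap_mem_sphere _ R.coe_nonneg _)))
    simpa using h1
  have hcoef : ‖cauchyPowerSeries G (↑t) R k‖ ≤ M * (2 / r) ^ k := by
    refine (norm_cauchyPowerSeries_le G (↑t) R k).trans ?_
    have h2 : |(R : ℝ)|⁻¹ ^ k = (2 / r) ^ k := by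
      rw [hRr, abs_of_pos (by positivity)]
      congr 1
      rw [inv_div]
    rw [h2]
    gcongr
    calc (2 * π)⁻¹ * ∫ θ : ℝ in (0)..2 * π, ‖G (circleMap (↑t) R θ)‖
        ≤ (2 * π)⁻¹ * (2 * π * M) := by
          gcongr
      _ = M := by field_simp
  -- relate to iteratedDeriv
  have hfac := h.factorial_smul (1 : ℂ) k
  have hiter : iteratedDeriv k G ↑t =
      (k ! : ℂ) * (cauchyPowerSeries G (↑t) R k fun _ => (1 : ℂ)) := by
    rw [iteratedDeriv_eq_iteratedFDeriv, ← hfac]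
    simp [nsmul_eq_mul]
  rw [hiter]
  have happ : ‖cauchyPowerSeries G (↑t) R k fun _ => (1 : ℂ)‖ ≤
      ‖cauchyPowerSeries G (↑t) R k‖ := by
    refine le_trans (ContinuousMultilinearMap.le_opNorm _ _) ?_
    simp
  calc ‖(k ! : ℂ) * (cauchyPowerSeries G (↑t) R k fun _ => (1 : ℂ))‖
      = (k ! : ℝ) * ‖cauchyPowerSeries G (↑t) R k fun _ => (1 : ℂ)‖ := by
        rw [norm_mul]
        norm_num
    _ ≤ (k ! : ℝ) * (M * (2 / r) ^ k) := by gcongr; exact happ.trans hcoef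
    _ = M * k ! * (2 / r) ^ k := by ring





lemma F_bound {C e r : ℝ} (hC : 0 ≤ C) (hr : 0 < r) {d : ℕ} (hd : 0 < d)
    (he : e = ((d : ℝ) + 1) / 2) {z : ℂ} (hz : |z.im| ≤ r / 2) :
    ‖F C e r z‖ ≤ 3 * C * 2 ^ d / r ^ d := by
  obtain ⟨hz1, hz2⟩ := abs_le.mp hz
  set a : ℝ := ‖z - I * ↑r‖ with ha'
  set b : ℝ := ‖z + I * ↑r‖ with hb'
  have hima : (z - I * ↑r).im = z.im - r := by simp
  have himb : (z + I * ↑r).im = z.im + r := by simp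
  have ha : r / 2 ≤ a := by
    have := Complex.abs_im_le_norm (z - I * ↑r)
    rw [hima, _root_.abs_of_nonpos (by linarith)] at this
    linarith
  have hb : r / 2 ≤ b := by
    have := Complex.abs_im_le_norm (z + I * ↑r)
    rw [himb, _root_.abs_of_nonneg (by linarith)] at this
    linarith
  have hapos : 0 < a := lt_of_lt_of_le (by positivity) ha
  have hbpos : 0 < b := lt_of_lt_of_le (by positivity) hb
  have habsz : ‖z‖ ≤ 3 * b := by
    have h1 : ‖z‖ ≤ b + ‖I * ↑r‖ := by
      calc ‖z‖ = ‖(z + I * ↑r) - I * ↑r‖ := by ring_nf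
        _ ≤ b + ‖I * ↑r‖ := by
            rw [hb']; exact (norm_sub_le _ _)
    have h2 : ‖I * ↑r‖ = r := by
      simp [abs_of_pos hr]
    nlinarith
  have hfact : z ^ 2 + (r : ℂ) ^ 2 = (z - I * ↑r) * (z + I * ↑r) := by
    rw [show (z - I * ↑r) * (z + I * ↑r) = z ^ 2 - I ^ 2 * (↑r) ^ 2 by ring, Complex.I_sq]
    ring
  have hprod : ‖z ^ 2 + (r : ℂ) ^ 2‖ = a * b := by
    rw [hfact, norm_mul]
  -- the rpow denominator bound
  have he1 : (1 : ℝ) ≤ e := by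
    rw [he]
    have : (1 : ℝ) ≤ (d : ℝ) := by exact_mod_cast hd
    linarith
  have hcast : ((d - 1 : ℕ) : ℝ) = (d : ℝ) - 1 := by
    rw [Nat.cast_sub hd]; norm_num
  have hkey : a * b * (r / 2) ^ (d - 1) ≤ (a * b) ^ e := by
    have habpos : 0 < a * b := mul_pos hapos hbpos
    have h1 : (a * b) ^ e = (a * b) * (a * b) ^ (e - 1) := by
      rw [show e = 1 + (e - 1) by ring, Real.rpow_add habpos, Real.rpow_one]
      ring_nf
    have h2 : ((r / 2) ^ (2 : ℕ) : ℝ) ^ (e - 1) ≤ (a * b) ^ (e - 1) := by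
      apply Real.rpow_le_rpow (by positivity) _ (by linarith)
      calc ((r / 2) ^ (2 : ℕ) : ℝ) = (r / 2) * (r / 2) := by ring
        _ ≤ a * b := by
            apply mul_le_mul ha hb (by positivity) hapos.le
    have h3 : ((r / 2) ^ (2 : ℕ) : ℝ) ^ (e - 1) = (r / 2) ^ (d - 1) := by
      rw [← Real.rpow_natCast (r / 2) 2, ← Real.rpow_mul (by positivity),
        show ((2 : ℕ) : ℝ) * (e - 1) = ((d - 1 : ℕ) : ℝ) by rw [hcast, he]; push_cast; ring,
        Real.rpow_natCast]
    rw [h1]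
    calc a * b * (r / 2) ^ (d - 1) = (a * b) * ((r / 2) ^ (2 : ℕ) : ℝ) ^ (e - 1) := by
          rw [h3]
      _ ≤ (a * b) * (a * b) ^ (e - 1) := by gcongr
  -- norm computation
  have hnorm : ‖F C e r z‖ = C * ‖z‖ / (a * b) ^ e := by
    unfold F
    rw [norm_div, norm_mul, Complex.norm_real, Real.norm_eq_abs, _root_.abs_of_nonneg hC,
      Complex.norm_cpow_real, hprod]
  rw [hnorm]
  have hden : 0 < a * b * (r / 2) ^ (d - 1) := by positivity
  calc C * ‖z‖ / (a * b) ^ e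
      ≤ C * (3 * b) / (a * b * (r / 2) ^ (d - 1)) := by
        gcongr
    _ = 3 * C / (a * (r / 2) ^ (d - 1)) := by
        field_simp
    _ ≤ 3 * C / ((r / 2) * (r / 2) ^ (d - 1)) := by
        gcongr
    _ = 3 * C * 2 ^ d / r ^ d := by
        rw [show (r / 2) * (r / 2) ^ (d - 1) = (r / 2) ^ d by
          rw [← pow_succ']
          congr 1
          omega]
        rw [div_pow]
        field_simp





lemma F_ofReal {C e r : ℝ} (hr : 0 < r) (t : ℝ) :
    F C e r ↑t = ((C * t / (t ^ 2 + r ^ 2) ^ e : ℝ) : ℂ) := by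
  unfold F
  rw [Complex.ofReal_div, Complex.ofReal_mul, Complex.ofReal_cpow (by positivity)]
  push_cast
  ring_nf


end Stmt6Aux


open Stmt6Aux in
/-- The Poisson kernel `p₁(t,x) = C_d t/(t²+|x|²)^{(d+1)/2}` (heat kernel of the
half-Laplacian) is, for each fixed `x ≠ 0`, real analytic in `t` on `[0,∞)`, with
`|∂_t^k p₁(t,x)| ≤ C₁ C₂^k k^k / |x|^{k+d}`. -/
theorem stmt6 (d : ℕ) (hd : 0 < d)
    (p : ℝ → EuclideanSpace ℝ (Fin d) → ℝ)
    (hp : ∀ t x, p t x = (Real.Gamma (((d : ℝ) + 1) / 2) / Real.pi ^ (((d : ℝ) + 1) / 2))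
        * t / (t ^ 2 + ‖x‖ ^ 2) ^ (((d : ℝ) + 1) / 2)) :
    (∀ x : EuclideanSpace ℝ (Fin d), x ≠ 0 →
        AnalyticOn ℝ (fun t => p t x) (Ici (0 : ℝ))) ∧
    ∃ C₁ > 0, ∃ C₂ > 0, ∀ (k : ℕ) (t : ℝ), 0 ≤ t →
      ∀ x : EuclideanSpace ℝ (Fin d), x ≠ 0 →
        |iteratedDeriv k (fun s => p s x) t|
          ≤ C₁ * C₂ ^ k * (k : ℝ) ^ (k : ℕ) / ‖x‖ ^ (k + d) := by
  set C : ℝ := Real.Gamma (((d : ℝ) + 1) / 2) / Real.pi ^ (((d : ℝ) + 1) / 2) with hC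
  set e : ℝ := ((d : ℝ) + 1) / 2 with he
  have hCpos : 0 < C := by
    apply div_pos (Real.Gamma_pos_of_pos (by positivity))
    exact Real.rpow_pos_of_pos Real.pi_pos _
  have hfun : ∀ x : EuclideanSpace ℝ (Fin d), x ≠ 0 →
      (fun t => p t x) = fun t : ℝ => (F C e ‖x‖ ↑t).re := by
    intro x hx
    have hr : 0 < ‖x‖ := norm_pos_iff.mpr hx
    funext t
    rw [hp t x, F_ofReal hr t, Complex.ofReal_re]
  constructor
  · intro x hx
    have hr : 0 < ‖x‖ := norm_pos_iff.mpr hx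
    rw [hfun x hx]
    apply AnalyticOnNhd.analyticOn
    intro t _
    have h1 : AnalyticAt ℂ (F C e ‖x‖) ↑t :=
      F_analyticOnNhd hr ↑t (by simp [Complex.ofReal_im, hr])
    exact (Complex.reCLM.analyticAt _).comp
      ((h1.restrictScalars).comp (Complex.ofRealCLM.analyticAt t))
  · refine ⟨3 * C * 2 ^ d, by positivity, 2, by norm_num, ?_⟩
    intro k t ht x hx
    have hr : 0 < ‖x‖ := norm_pos_iff.mpr hx
    set r : ℝ := ‖x‖ with hrdef
    rw [hfun x hx]
    rw [iteratedDeriv_re_comp hr k (F C e r) (F_analyticOnNhd hr) t]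
    have h1 : |(iteratedDeriv k (F C e r) ↑t).re| ≤ ‖iteratedDeriv k (F C e r) ↑t‖ :=
      Complex.abs_re_le_norm _
    have h2 := cauchy_bound hr (fun z hz => F_diffAt hr hz)
      (fun z hz => F_bound hCpos.le hr hd he hz) k t
    have h3 : (k ! : ℝ) ≤ (k : ℝ) ^ (k : ℕ) := by
      exact_mod_cast Nat.factorial_le_pow k
    calc |(iteratedDeriv k (F C e r) ↑t).re|
        ≤ 3 * C * 2 ^ d / r ^ d * k ! * (2 / r) ^ k := h1.trans h2
      _ = 3 * C * 2 ^ d * 2 ^ k * k ! / r ^ (k + d) := by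
          rw [div_pow, pow_add]
          field_simp
      _ ≤ 3 * C * 2 ^ d * 2 ^ k * (k : ℝ) ^ (k : ℕ) / r ^ (k + d) := by gcongr
      _ = 3 * C * 2 ^ d * 2 ^ k * (k : ℝ) ^ (k : ℕ) / ‖x‖ ^ (k + d) := rfl
end

section
/- Suppose a kernel p(t,x;y) on (0,1] × ℝ^d × ℝ^d satisfies the semigroup property p(t,x;y) = ∫ p(t-τ,x;z) p(τ,z;y) dz for 0 < τ < t, the two-sided bound p(t,x;y) ≤ C₂ t/(t^{1/α}+|x-y|)^{d+α}, and the first-derivative bound |∂_t p(t,x;y)| ≤ C₂/(t^{1/α}+|x-y|)^{d+α}. Then there is a constant C such that for all integers k ≥ 1 and t ∈ (0,1], |∂_t^k p(t,x;y)| ≤ C^{k+1} k^k t^{-(k-1)} (t^{1/α}+|x-y|)^{-(d+α)}. -/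
open Real Set MeasureTheory Filter Topology Module


private lemma differentiableAt_iteratedDeriv_open {f : ℝ → ℝ} {s : Set ℝ} (hs : IsOpen s)
    (hf : ContDiffOn ℝ (⊤ : ℕ∞) f s) {t : ℝ} (ht : t ∈ s) (n : ℕ) :
    DifferentiableAt ℝ (iteratedDeriv n f) t := by
  have hmem : s ∈ 𝓝 t := hs.mem_nhds ht
  have hEq : ∀ x ∈ s, iteratedDerivWithin n f s x = iteratedDeriv n f x := by
    intro x hx
    rw [iteratedDerivWithin_eq_iteratedFDerivWithin, iteratedFDerivWithin_of_isOpen n hs hx,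
      iteratedDeriv_eq_iteratedFDeriv]
  have heq : iteratedDerivWithin n f s =ᶠ[𝓝 t] iteratedDeriv n f :=
    eventuallyEq_of_mem hmem hEq
  have hdiff : DifferentiableOn ℝ (iteratedDerivWithin n f s) s :=
    hf.differentiableOn_iteratedDerivWithin (by exact_mod_cast WithTop.coe_lt_top _)
      hs.uniqueDiffOn
  exact ((hdiff t ht).differentiableAt hmem).congr_of_eventuallyEq heq.symm

private lemma hasDerivAt_iteratedDeriv_open {f : ℝ → ℝ} {s : Set ℝ} (hs : IsOpen s)
    (hf : ContDiffOn ℝ (⊤ : ℕ∞) f s) {t : ℝ} (ht : t ∈ s) (n : ℕ) :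
    HasDerivAt (iteratedDeriv n f) (iteratedDeriv (n + 1) f t) t := by
  have h := (differentiableAt_iteratedDeriv_open hs hf ht n).hasDerivAt
  rwa [iteratedDeriv_succ]


private lemma integrable_knl {d : ℕ} {β : ℝ} (hβ : (d : ℝ) < β) {a : ℝ} (ha : 0 < a)
    (x : EuclideanSpace ℝ (Fin d)) :
    Integrable (fun z : EuclideanSpace ℝ (Fin d) => (a + ‖x - z‖) ^ (-β)) := by
  have hfin : (finrank ℝ (EuclideanSpace ℝ (Fin d)) : ℝ) < β := by
    rwa [finrank_euclideanSpace_fin]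
  have hbase : Integrable (fun z : EuclideanSpace ℝ (Fin d) => ((1:ℝ) + ‖z‖) ^ (-β)) :=
    integrable_one_add_norm hfin
  have h1 : Integrable (fun z : EuclideanSpace ℝ (Fin d) =>
      (min a 1) ^ (-β) * ((1:ℝ) + ‖z‖) ^ (-β)) := hbase.const_mul _
  have h2 : Integrable (fun z : EuclideanSpace ℝ (Fin d) => (a + ‖z‖) ^ (-β)) := by
    refine h1.mono' ?_ ?_
    · exact ((continuous_const.add continuous_norm).rpow_const
        (fun z => Or.inl (show a + ‖z‖ ≠ 0 by positivity))).aestronglyMeasurable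
    · refine Filter.Eventually.of_forall (fun z => ?_)
      rw [Real.norm_eq_abs, abs_of_nonneg (by positivity)]
      rw [← Real.mul_rpow (by positivity) (by positivity)]
      refine Real.rpow_le_rpow_of_nonpos (by positivity) ?_ (by linarith [hβ, (Nat.cast_nonneg d : (0:ℝ) ≤ d)])
      calc min a 1 * (1 + ‖z‖) = min a 1 + min a 1 * ‖z‖ := by ring
        _ ≤ a + ‖z‖ := by
            have h3 : min a 1 * ‖z‖ ≤ ‖z‖ := by
              nlinarith [min_le_right a 1, norm_nonneg z, min_le_left a 1, le_min (le_of_lt ha) zero_le_one]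
            have := min_le_left a 1
            linarith
  exact h2.comp_sub_left x

private lemma integral_knl_eq {d : ℕ} {β : ℝ} (hβ : (d : ℝ) < β) {a : ℝ} (ha : 0 < a)
    (x : EuclideanSpace ℝ (Fin d)) :
    ∫ z : EuclideanSpace ℝ (Fin d), (a + ‖x - z‖) ^ (-β)
      = a ^ ((d : ℝ) - β) * ∫ w : EuclideanSpace ℝ (Fin d), ((1:ℝ) + ‖w‖) ^ (-β) := by
  have h0 : ∫ z : EuclideanSpace ℝ (Fin d), (a + ‖x - z‖) ^ (-β)
      = ∫ z : EuclideanSpace ℝ (Fin d), (a + ‖z‖) ^ (-β) :=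
    integral_sub_left_eq_self (fun z => (a + ‖z‖) ^ (-β)) volume x
  have h1 : ∫ z : EuclideanSpace ℝ (Fin d), ((a + ‖a • z‖) ^ (-β))
      = |(a ^ finrank ℝ (EuclideanSpace ℝ (Fin d)))⁻¹|
        • ∫ z : EuclideanSpace ℝ (Fin d), (a + ‖z‖) ^ (-β) :=
    MeasureTheory.Measure.integral_comp_smul volume (fun z => (a + ‖z‖) ^ (-β)) a
  have h2 : ∀ z : EuclideanSpace ℝ (Fin d),
      (a + ‖a • z‖) ^ (-β) = a ^ (-β) * ((1:ℝ) + ‖z‖) ^ (-β) := by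
    intro z
    rw [norm_smul, Real.norm_eq_abs, abs_of_pos ha,
      show a + a * ‖z‖ = a * (1 + ‖z‖) by ring,
      Real.mul_rpow (le_of_lt ha) (by positivity)]
  simp only [h2] at h1
  rw [MeasureTheory.integral_const_mul] at h1
  rw [h0]
  rw [finrank_euclideanSpace_fin] at h1
  have ha' : (0:ℝ) < a ^ (d:ℕ) := by positivity
  rw [abs_of_pos (by positivity : (0:ℝ) < (a ^ (d:ℕ))⁻¹), smul_eq_mul] at h1
  have hne : ((a:ℝ) ^ (d:ℕ))⁻¹ ≠ 0 := by positivity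
  have key : ∫ (z : EuclideanSpace ℝ (Fin d)), (a + ‖z‖) ^ (-β)
      = a ^ (d:ℕ) * a ^ (-β) * ∫ (w : EuclideanSpace ℝ (Fin d)), ((1:ℝ) + ‖w‖) ^ (-β) := by
    field_simp at h1 ⊢
    linarith [h1]
  rw [key]
  congr 1
  rw [← Real.rpow_natCast a d, ← Real.rpow_add ha, sub_eq_add_neg]

private lemma caseA_arith {d k : ℕ} {α C₂ J K t r : ℝ} (hk : 2 ≤ k) (hα : 0 < α)
    (ht0 : 0 < t) (ht1 : t < 1) (hC₂ : 0 < C₂) (hJ : 0 ≤ J) (hK1 : 1 ≤ K)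
    (hKA : C₂*J*2^(((d:ℝ)+α)*(1+1/α)) ≤ K) (hr0 : 0 ≤ r) (hcase : r ≤ t^(1/α)) :
    C₂ * (((t/(k:ℝ)) ^ (1/α)) ^ ((d:ℝ) - ((d:ℝ)+α)) * J) *
      ((K ^ (k-1+1) * ((k-1:ℕ):ℝ)^((k-1:ℕ)) * (t - t/(k:ℝ)) ^ ((1:ℝ) - ((k-1:ℕ):ℝ))) *
        ((t - t/(k:ℝ)) ^ (1/α)) ^ (-((d:ℝ)+α)))
      ≤ K ^ (k+1) * (k:ℝ)^(k:ℕ) * t ^ ((1:ℝ) - (k:ℕ)) / (t ^ (1/α) + r) ^ ((d:ℝ)+α) := by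
  have hβpos : (0:ℝ) < (d:ℝ)+α := by positivity
  set β := (d:ℝ) + α with hβ
  have hkR : (2:ℝ) ≤ (k:ℝ) := by exact_mod_cast hk
  have hkpos : (0:ℝ) < (k:ℝ) := by linarith
  have hKpos : (0:ℝ) < K := by linarith
  have hk1R : (0:ℝ) < (k:ℝ) - 1 := by linarith
  have hcast : ((k-1:ℕ):ℝ) = (k:ℝ) - 1 := by
    have h1 : (1:ℕ) ≤ k := by omega
    rw [Nat.cast_sub h1]; norm_num
  have hkk : k - 1 + 1 = k := by omega
  have hu : 0 < t/(k:ℝ) := div_pos ht0 hkpos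
  have hudiv : t/(k:ℝ) ≤ t/2 := div_le_div_of_nonneg_left ht0.le (by norm_num) hkR
  have hv : 0 < t - t/(k:ℝ) := by linarith
  have hvge : t/2 ≤ t - t/(k:ℝ) := by linarith
  have htα : 0 < t^(1/α) := Real.rpow_pos_of_pos ht0 _
  have hD : 0 < (t^(1/α)+r)^β := Real.rpow_pos_of_pos (by linarith) _
  rw [le_div_iff₀ hD]
  have E1 : ((t/(k:ℝ)) ^ (1/α)) ^ ((d:ℝ) - β) = (k:ℝ) * t^(-(1:ℝ)) := by
    rw [← Real.rpow_mul hu.le]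
    rw [show (1/α)*((d:ℝ) - β) = -1 by rw [hβ]; field_simp; ring]
    rw [Real.rpow_neg_one, inv_div, div_eq_mul_inv, ← Real.rpow_neg_one t]
  have E2 : ((t - t/(k:ℝ)) ^ (1/α)) ^ (-β) = (t - t/(k:ℝ)) ^ (-(β/α)) := by
    rw [← Real.rpow_mul hv.le]
    congr 1
    field_simp
  have hveq : t - t/(k:ℝ) = (((k:ℝ)-1)/(k:ℝ))*t := by field_simp
  have E5 : (t - t/(k:ℝ)) ^ ((1:ℝ) - ((k:ℝ)-1))
      = (((k:ℝ)-1)^((2:ℝ)-(k:ℝ)) * (((k:ℝ)^((2:ℝ)-(k:ℝ)))⁻¹)) * t^((2:ℝ)-(k:ℝ)) := by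
    rw [show (1:ℝ) - ((k:ℝ)-1) = (2:ℝ)-(k:ℝ) by ring, hveq,
      Real.mul_rpow (by positivity) ht0.le, Real.div_rpow hk1R.le hkpos.le, div_eq_mul_inv]
  have E3 : (t - t/(k:ℝ)) ^ (-(β/α)) ≤ t^(-(β/α)) * 2^(β/α) := by
    have h1 : (t - t/(k:ℝ)) ^ (-(β/α)) ≤ (t/2) ^ (-(β/α)) :=
      Real.rpow_le_rpow_of_nonpos (by linarith) hvge (by rw [neg_nonpos]; positivity)
    have h2 : ((t/2:ℝ)) ^ (-(β/α)) = t^(-(β/α)) * 2^(β/α) := by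
      rw [Real.div_rpow ht0.le (by norm_num), Real.rpow_neg (by norm_num : (0:ℝ) ≤ 2),
        div_eq_mul_inv, inv_inv]
    rwa [h2] at h1
  have E4 : (t^(1/α)+r)^β ≤ 2^β * t^(β/α) := by
    calc (t^(1/α)+r)^β ≤ (2*t^(1/α))^β :=
          Real.rpow_le_rpow (by positivity) (by linarith) hβpos.le
      _ = 2^β * (t^(1/α))^β := Real.mul_rpow (by norm_num) htα.le
      _ = 2^β * t^(β/α) := by
          rw [← Real.rpow_mul ht0.le, show (1/α)*β = β/α by ring]
  rw [hkk, hcast, E1, E2, ← Real.rpow_natCast ((k:ℝ)-1) (k-1), hcast, E5,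
    ← Real.rpow_natCast (k:ℝ) k, pow_succ]
  have W1 : (2:ℝ)^(β/α) * 2^β = 2^(β*(1+1/α)) := by
    rw [← Real.rpow_add two_pos]; congr 1; field_simp; ring
  have W2 : ((k:ℝ)-1)^((k:ℝ)-1) * ((k:ℝ)-1)^((2:ℝ)-(k:ℝ)) = (k:ℝ)-1 := by
    rw [← Real.rpow_add hk1R, show ((k:ℝ)-1)+((2:ℝ)-(k:ℝ)) = 1 by ring, Real.rpow_one]
  have W3 : (k:ℝ) * (((k:ℝ)^((2:ℝ)-(k:ℝ)))⁻¹) = (k:ℝ)^((k:ℝ)-1) := by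
    rw [← Real.rpow_neg hkpos.le]
    nth_rewrite 1 [← Real.rpow_one (k:ℝ)]
    rw [← Real.rpow_add hkpos]; congr 1; ring
  have W4 : (t^(-(1:ℝ))*t^((2:ℝ)-(k:ℝ)))*(t^(-(β/α))*t^(β/α)) = t^((1:ℝ)-(k:ℝ)) := by
    rw [← Real.rpow_add ht0, ← Real.rpow_add ht0, ← Real.rpow_add ht0]; congr 1; ring
  have W5 : (k:ℝ)^((k:ℕ):ℝ) = (k:ℝ) * (k:ℝ)^((k:ℝ)-1) := by
    rw [show (k:ℝ) * (k:ℝ)^((k:ℝ)-1) = (k:ℝ)^((1:ℝ)+((k:ℝ)-1)) from by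
      rw [Real.rpow_add hkpos, Real.rpow_one]]
    congr 1; ring
  calc C₂ * ((k:ℝ) * t ^ (-(1:ℝ)) * J) *
        (K ^ k * ((k:ℝ) - 1) ^ ((k:ℝ) - 1) *
            (((k:ℝ) - 1) ^ ((2:ℝ) - (k:ℝ)) * (((k:ℝ):ℝ) ^ ((2:ℝ) - (k:ℝ)))⁻¹ * t ^ ((2:ℝ) - (k:ℝ))) *
          (t - t / (k:ℝ)) ^ (-(β / α))) *
      (t ^ (1 / α) + r) ^ β
      ≤ C₂ * ((k:ℝ) * t ^ (-(1:ℝ)) * J) *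
        (K ^ k * ((k:ℝ) - 1) ^ ((k:ℝ) - 1) *
            (((k:ℝ) - 1) ^ ((2:ℝ) - (k:ℝ)) * (((k:ℝ):ℝ) ^ ((2:ℝ) - (k:ℝ)))⁻¹ * t ^ ((2:ℝ) - (k:ℝ))) *
          (t^(-(β/α)) * 2^(β/α))) *
      (2^β * t^(β/α)) := by
        have h1 : (0:ℝ) < ((k:ℝ)) ^ ((2:ℝ) - (k:ℝ)) := Real.rpow_pos_of_pos hkpos _
        have h2 : (0:ℝ) < ((k:ℝ)-1) ^ ((k:ℝ)-1) := Real.rpow_pos_of_pos hk1R _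
        have h3 : (0:ℝ) < ((k:ℝ)-1) ^ ((2:ℝ)-(k:ℝ)) := Real.rpow_pos_of_pos hk1R _
        have h4 : (0:ℝ) < t ^ ((2:ℝ)-(k:ℝ)) := Real.rpow_pos_of_pos ht0 _
        have h5 : (0:ℝ) < t ^ (-(1:ℝ)) := Real.rpow_pos_of_pos ht0 _
        gcongr
    _ = (C₂*J*((2:ℝ)^(β/α) * 2^β)) * K ^ k *
          ((((k:ℝ)-1)^((k:ℝ)-1) * ((k:ℝ)-1)^((2:ℝ)-(k:ℝ))) * ((k:ℝ) * (((k:ℝ)^((2:ℝ)-(k:ℝ)))⁻¹))) *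
          ((t^(-(1:ℝ))*t^((2:ℝ)-(k:ℝ)))*(t^(-(β/α))*t^(β/α))) := by ring
    _ = (C₂*J*2^(β*(1+1/α))) * K ^ k * (((k:ℝ)-1) * (k:ℝ)^((k:ℝ)-1)) * t^((1:ℝ)-(k:ℝ)) := by
        rw [W1, W2, W3, W4]
    _ ≤ K * K ^ k * ((k:ℝ) * (k:ℝ)^((k:ℝ)-1)) * t^((1:ℝ)-(k:ℝ)) := by
        have h6 : (0:ℝ) < (k:ℝ)^((k:ℝ)-1) := Real.rpow_pos_of_pos hkpos _
        have h7 : (0:ℝ) < t^((1:ℝ)-(k:ℝ)) := Real.rpow_pos_of_pos ht0 _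
        gcongr
        linarith
    _ = K ^ k * K * (k:ℝ)^((k:ℕ):ℝ) * t^((1:ℝ)-(k:ℝ)) := by rw [W5]; ring

private lemma caseB_arith {d k : ℕ} {α C₂ J K t r : ℝ} (hk : 2 ≤ k) (hα : 0 < α)
    (ht0 : 0 < t) (ht1 : t < 1) (hC₂ : 0 < C₂) (hJ : 0 ≤ J) (hK1 : 1 ≤ K)
    (hKB : 2*(C₂*J*4^((d:ℝ)+α)) ≤ K) (hcase : t^(1/α) < r) :
    C₂ * (r/2) ^ (-((d:ℝ)+α)) *
        ((K ^ (k-1+1) * ((k-1:ℕ):ℝ)^((k-1:ℕ)) * (t - t/(k:ℝ)) ^ ((1:ℝ) - ((k-1:ℕ):ℝ))) *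
          (((t - t/(k:ℝ)) ^ (1/α)) ^ ((d:ℝ) - ((d:ℝ)+α)) * J))
      + C₂ * (((t/(k:ℝ)) ^ (1/α)) ^ ((d:ℝ) - ((d:ℝ)+α)) * J) *
          ((K ^ (k-1+1) * ((k-1:ℕ):ℝ)^((k-1:ℕ)) * (t - t/(k:ℝ)) ^ ((1:ℝ) - ((k-1:ℕ):ℝ))) *
            (r/2) ^ (-((d:ℝ)+α)))
      ≤ K ^ (k+1) * (k:ℝ)^(k:ℕ) * t ^ ((1:ℝ) - (k:ℕ)) / (t ^ (1/α) + r) ^ ((d:ℝ)+α) := by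
  have hβpos : (0:ℝ) < (d:ℝ)+α := by positivity
  set β := (d:ℝ) + α with hβ
  have hkR : (2:ℝ) ≤ (k:ℝ) := by exact_mod_cast hk
  have hkpos : (0:ℝ) < (k:ℝ) := by linarith
  have hKpos : (0:ℝ) < K := by linarith
  have hk1R : (0:ℝ) < (k:ℝ) - 1 := by linarith
  have hcast : ((k-1:ℕ):ℝ) = (k:ℝ) - 1 := by
    have h1 : (1:ℕ) ≤ k := by omega
    rw [Nat.cast_sub h1]; norm_num
  have hkk : k - 1 + 1 = k := by omega
  have hu : 0 < t/(k:ℝ) := div_pos ht0 hkpos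
  have hudiv : t/(k:ℝ) ≤ t/2 := div_le_div_of_nonneg_left ht0.le (by norm_num) hkR
  have hv : 0 < t - t/(k:ℝ) := by linarith
  have htα : 0 < t^(1/α) := Real.rpow_pos_of_pos ht0 _
  have hrpos : 0 < r := lt_trans htα hcase
  have hr2 : 0 < r/2 := by linarith
  have hD : 0 < (t^(1/α)+r)^β := Real.rpow_pos_of_pos (by linarith) _
  have hveq : t - t/(k:ℝ) = (((k:ℝ)-1)/(k:ℝ))*t := by field_simp
  have hVpow : ∀ e : ℝ, (t - t/(k:ℝ))^e = ((k:ℝ)-1)^e * (((k:ℝ)^e)⁻¹) * t^e := by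
    intro e
    rw [hveq, Real.mul_rpow (by positivity) ht0.le, Real.div_rpow hk1R.le hkpos.le,
      div_eq_mul_inv]
  have E1u : ((t/(k:ℝ)) ^ (1/α)) ^ ((d:ℝ) - β) = (k:ℝ) * t^(-(1:ℝ)) := by
    rw [← Real.rpow_mul hu.le]
    rw [show (1/α)*((d:ℝ) - β) = -1 by rw [hβ]; field_simp; ring]
    rw [Real.rpow_neg_one, inv_div, div_eq_mul_inv, ← Real.rpow_neg_one t]
  have E1v : ((t - t/(k:ℝ)) ^ (1/α)) ^ ((d:ℝ) - β) = (t - t/(k:ℝ))^(-(1:ℝ)) := by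
    rw [← Real.rpow_mul hv.le]
    congr 1
    rw [hβ]; field_simp; ring
  have ER : (r/2) ^ (-β) ≤ 4^β * (((t^(1/α)+r)^β)⁻¹) := by
    have key : (t^(1/α)+r)^β ≤ 4^β*(r/2)^β := by
      calc (t^(1/α)+r)^β ≤ (2*r)^β :=
            Real.rpow_le_rpow (by positivity) (by linarith) hβpos.le
        _ = 4^β*(r/2)^β := by
            rw [← Real.mul_rpow (by norm_num) hr2.le]
            congr 1
            ring
    have hr2β : (0:ℝ) < (r/2)^β := Real.rpow_pos_of_pos hr2 _
    rw [Real.rpow_neg hr2.le, ← one_div, ← div_eq_mul_inv, div_le_div_iff₀ hr2β hD]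
    calc 1 * (t^(1/α)+r)^β = (t^(1/α)+r)^β := one_mul _
      _ ≤ 4^β*(r/2)^β := key
  rw [hkk, hcast, E1u, E1v, ← Real.rpow_natCast ((k:ℝ)-1) (k-1), hcast,
    ← Real.rpow_natCast (k:ℝ) k, pow_succ,
    show (1:ℝ) - ((k:ℝ)-1) = (2:ℝ)-(k:ℝ) by ring, div_eq_mul_inv
      (K ^ k * K * (k:ℝ) ^ ((k:ℕ):ℝ) * t ^ ((1:ℝ) - (k:ℕ)))]
  have hDi : (0:ℝ) < ((t^(1/α)+r)^β)⁻¹ := by positivity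
  have h4β : (0:ℝ) < (4:ℝ)^β := Real.rpow_pos_of_pos (by norm_num) _
  have hX0 : (0:ℝ) ≤ C₂*J*4^β := by positivity
  have hXK : C₂*J*4^β ≤ K := by linarith
  have W2 : ((k:ℝ)-1)^((k:ℝ)-1) * ((k:ℝ)-1)^((2:ℝ)-(k:ℝ)) = (k:ℝ)-1 := by
    rw [← Real.rpow_add hk1R, show ((k:ℝ)-1)+((2:ℝ)-(k:ℝ)) = 1 by ring, Real.rpow_one]
  have W3 : (k:ℝ) * (((k:ℝ)^((2:ℝ)-(k:ℝ)))⁻¹) = (k:ℝ)^((k:ℝ)-1) := by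
    rw [← Real.rpow_neg hkpos.le]
    nth_rewrite 1 [← Real.rpow_one (k:ℝ)]
    rw [← Real.rpow_add hkpos]; congr 1; ring
  have W5 : (k:ℝ)^((k:ℕ):ℝ) = (k:ℝ) * (k:ℝ)^((k:ℝ)-1) := by
    rw [show (k:ℝ) * (k:ℝ)^((k:ℝ)-1) = (k:ℝ)^((1:ℝ)+((k:ℝ)-1)) from by
      rw [Real.rpow_add hkpos, Real.rpow_one]]
    congr 1; ring
  have G1 : ((k:ℝ)-1)^((k:ℝ)-1) * (((k:ℝ)-1)^((2:ℝ)-(k:ℝ)) * ((k:ℝ)-1)^(-(1:ℝ))) = 1 := by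
    rw [← Real.rpow_add hk1R, ← Real.rpow_add hk1R,
      show ((k:ℝ)-1)+(((2:ℝ)-(k:ℝ))+(-(1:ℝ))) = 0 by ring, Real.rpow_zero]
  have G2 : (((k:ℝ)^((2:ℝ)-(k:ℝ)))⁻¹) * (((k:ℝ)^(-(1:ℝ)))⁻¹) = (k:ℝ)^((k:ℝ)-1) := by
    rw [← Real.rpow_neg hkpos.le, ← Real.rpow_neg hkpos.le, ← Real.rpow_add hkpos]
    congr 1; ring
  have G5 : t^((2:ℝ)-(k:ℝ))*t^(-(1:ℝ)) = t^((1:ℝ)-(k:ℝ)) := by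
    rw [← Real.rpow_add ht0]; congr 1; ring
  have hvA : (0:ℝ) < (t - t/(k:ℝ)) ^ ((2:ℝ)-(k:ℝ)) := Real.rpow_pos_of_pos hv _
  have hvB : (0:ℝ) < (t - t/(k:ℝ)) ^ (-(1:ℝ)) := Real.rpow_pos_of_pos hv _
  have hk1p : (0:ℝ) < ((k:ℝ)-1)^((k:ℝ)-1) := Real.rpow_pos_of_pos hk1R _
  have htn : (0:ℝ) < t^(-(1:ℝ)) := Real.rpow_pos_of_pos ht0 _
  calc C₂ * (r/2) ^ (-β) * (K ^ k * ((k:ℝ) - 1) ^ ((k:ℝ) - 1) * (t - t / (k:ℝ)) ^ ((2:ℝ) - (k:ℝ)) *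
          ((t - t / (k:ℝ)) ^ (-(1:ℝ)) * J)) +
        C₂ * ((k:ℝ) * t ^ (-(1:ℝ)) * J) *
          (K ^ k * ((k:ℝ) - 1) ^ ((k:ℝ) - 1) * (t - t / (k:ℝ)) ^ ((2:ℝ) - (k:ℝ)) * (r/2) ^ (-β))
      ≤ C₂ * (4^β * (((t^(1/α)+r)^β)⁻¹)) * (K ^ k * ((k:ℝ) - 1) ^ ((k:ℝ) - 1) *
            (t - t / (k:ℝ)) ^ ((2:ℝ) - (k:ℝ)) * ((t - t / (k:ℝ)) ^ (-(1:ℝ)) * J)) +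
          C₂ * ((k:ℝ) * t ^ (-(1:ℝ)) * J) * (K ^ k * ((k:ℝ) - 1) ^ ((k:ℝ) - 1) *
            (t - t / (k:ℝ)) ^ ((2:ℝ) - (k:ℝ)) * (4^β * (((t^(1/α)+r)^β)⁻¹))) := by
        gcongr
    _ = C₂ * (4^β * (((t^(1/α)+r)^β)⁻¹)) * (K ^ k * ((k:ℝ) - 1) ^ ((k:ℝ) - 1) *
            (((k:ℝ)-1)^((2:ℝ)-(k:ℝ)) * (((k:ℝ)^((2:ℝ)-(k:ℝ)))⁻¹) * t^((2:ℝ)-(k:ℝ))) *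
            ((((k:ℝ)-1)^(-(1:ℝ)) * (((k:ℝ)^(-(1:ℝ)))⁻¹) * t^(-(1:ℝ))) * J)) +
          C₂ * ((k:ℝ) * t ^ (-(1:ℝ)) * J) * (K ^ k * ((k:ℝ) - 1) ^ ((k:ℝ) - 1) *
            (((k:ℝ)-1)^((2:ℝ)-(k:ℝ)) * (((k:ℝ)^((2:ℝ)-(k:ℝ)))⁻¹) * t^((2:ℝ)-(k:ℝ))) *
            (4^β * (((t^(1/α)+r)^β)⁻¹))) := by
        rw [← hVpow ((2:ℝ)-(k:ℝ)), ← hVpow (-(1:ℝ))]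
    _ = (C₂*J*(4:ℝ)^β) * K^k *
          ((((k:ℝ)-1)^((k:ℝ)-1) * (((k:ℝ)-1)^((2:ℝ)-(k:ℝ)) * ((k:ℝ)-1)^(-(1:ℝ)))) *
              ((((k:ℝ)^((2:ℝ)-(k:ℝ)))⁻¹) * (((k:ℝ)^(-(1:ℝ)))⁻¹))
            + (((k:ℝ)-1)^((k:ℝ)-1) * ((k:ℝ)-1)^((2:ℝ)-(k:ℝ))) * ((k:ℝ) * (((k:ℝ)^((2:ℝ)-(k:ℝ)))⁻¹))) *
          (t^((2:ℝ)-(k:ℝ))*t^(-(1:ℝ))) * (((t^(1/α)+r)^β)⁻¹) := by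
        ring
    _ = (C₂*J*(4:ℝ)^β) * K^k * ((1:ℝ) * (k:ℝ)^((k:ℝ)-1) + ((k:ℝ)-1) * (k:ℝ)^((k:ℝ)-1)) *
          t^((1:ℝ)-(k:ℝ)) * (((t^(1/α)+r)^β)⁻¹) := by
        rw [G1, G2, W2, W3, G5]
    _ = (C₂*J*(4:ℝ)^β) * K^k * ((k:ℝ) * (k:ℝ)^((k:ℝ)-1)) *
          t^((1:ℝ)-(k:ℝ)) * (((t^(1/α)+r)^β)⁻¹) := by ring
    _ ≤ K * K^k * ((k:ℝ) * (k:ℝ)^((k:ℝ)-1)) * t^((1:ℝ)-(k:ℝ)) * (((t^(1/α)+r)^β)⁻¹) := by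
        have h6 : (0:ℝ) < (k:ℝ)^((k:ℝ)-1) := Real.rpow_pos_of_pos hkpos _
        have h7 : (0:ℝ) < t^((1:ℝ)-(k:ℝ)) := Real.rpow_pos_of_pos ht0 _
        gcongr
    _ = K ^ k * K * (k:ℝ)^((k:ℕ):ℝ) * t ^ ((1:ℝ) - (k:ℕ)) * (((t^(1/α)+r)^β)⁻¹) := by
        rw [W5]; ring

set_option maxHeartbeats 1000000 in
private lemma core_step {d : ℕ} {α : ℝ} (hα : 0 < α)
    {p : ℝ → EuclideanSpace ℝ (Fin d) → EuclideanSpace ℝ (Fin d) → ℝ}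
    {C₂ : ℝ} (hC₂ : 0 < C₂)
    (hsmooth : ∀ x y, ContDiffOn ℝ (⊤ : ℕ∞) (fun t => p t x y) (Ioc (0:ℝ) 1))
    (hsemigroup : ∀ (t τ : ℝ) (x y : EuclideanSpace ℝ (Fin d)),
      0 < τ → τ < t → t ≤ 1 →
      p t x y = ∫ z : EuclideanSpace ℝ (Fin d), p (t - τ) x z * p τ z y)
    (hlower : ∀ t ∈ Ioc (0:ℝ) 1, ∀ x y, 0 ≤ p t x y)
    (hupper : ∀ t ∈ Ioc (0:ℝ) 1, ∀ x y,
      p t x y ≤ C₂ * t / (t ^ (1/α) + ‖x - y‖) ^ ((d : ℝ) + α))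
    (hderiv : ∀ t ∈ Ioc (0:ℝ) 1, ∀ x y,
      |deriv (fun s => p s x y) t| ≤ C₂ / (t ^ (1/α) + ‖x - y‖) ^ ((d : ℝ) + α))
    {J K : ℝ}
    (hJ : J = ∫ w : EuclideanSpace ℝ (Fin d), ((1:ℝ) + ‖w‖) ^ (-((d:ℝ)+α)))
    (hK1 : 1 ≤ K)
    (hKA : C₂*J*2^(((d:ℝ)+α)*(1+1/α)) ≤ K)
    (hKB : 2*(C₂*J*4^((d:ℝ)+α)) ≤ K)
    {k : ℕ} (hk : 2 ≤ k)
    (IH : ∀ j : ℕ, 1 ≤ j → j < k → ∀ v ∈ Ioo (0:ℝ) 1, ∀ z w,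
        |iteratedDeriv j (fun s => p s z w) v|
          ≤ K ^ (j+1) * (j:ℝ)^(j:ℕ) * v ^ ((1:ℝ) - j) / (v ^ (1/α) + ‖z - w‖) ^ ((d:ℝ)+α))
    {t : ℝ} (ht : t ∈ Ioo (0:ℝ) 1) {x y : EuclideanSpace ℝ (Fin d)} (hne : p t x y ≠ 0) :
    |iteratedDeriv k (fun s => p s x y) t|
      ≤ K ^ (k+1) * (k:ℝ)^(k:ℕ) * t ^ ((1:ℝ) - k) / (t ^ (1/α) + ‖x - y‖) ^ ((d:ℝ)+α) := by
  have hβpos : (0:ℝ) < (d:ℝ) + α := by positivity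
  have hdβ : (d:ℝ) < (d:ℝ) + α := by linarith
  set β := (d:ℝ) + α with hβdef
  obtain ⟨ht0, ht1⟩ := ht
  have hkR : (2:ℝ) ≤ (k:ℝ) := by exact_mod_cast hk
  have hkpos : (0:ℝ) < (k:ℝ) := by linarith
  set u₀ := t / k with hu₀def
  set v₀ := t - t / k with hv₀def
  have hu₀ : 0 < u₀ := div_pos ht0 hkpos
  have hu₀le : u₀ ≤ t/2 := by
    rw [hu₀def]
    exact div_le_div_of_nonneg_left ht0.le (by norm_num) hkR
  have hv₀ge : t/2 ≤ v₀ := by rw [hv₀def]; linarith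
  have hv₀lt : v₀ < t := by rw [hv₀def]; linarith
  have hv₀pos : 0 < v₀ := lt_of_lt_of_le (half_pos ht0) hv₀ge
  have huv₀ : u₀ + v₀ = t := by rw [hu₀def, hv₀def]; ring
  -- open set where p · x y ≠ 0
  have hcontf : ContinuousOn (fun s => p s x y) (Ioo (0:ℝ) 1) :=
    ((hsmooth x y).mono Ioo_subset_Ioc_self).continuousOn
  have hUopen : IsOpen (Ioo (0:ℝ) 1 ∩ (fun s => p s x y) ⁻¹' ({0}ᶜ)) :=
    hcontf.isOpen_inter_preimage isOpen_Ioo (isOpen_compl_singleton)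
  obtain ⟨εU, hεUpos, hballU⟩ := Metric.isOpen_iff.mp hUopen t ⟨⟨ht0, ht1⟩, hne⟩
  set ε := min (u₀/2) (εU/2) with hεdef
  have hεpos : 0 < ε := lt_min (by positivity) (by positivity)
  have hεu : ε ≤ u₀/2 := min_le_left _ _
  have hεU2 : ε ≤ εU/2 := min_le_right _ _
  have hu₀me : 0 < u₀ - ε := by linarith
  have hv₀me : 0 < v₀ - ε := by linarith
  have hmemIoo : ∀ u ∈ Metric.ball u₀ ε, u ∈ Ioo (0:ℝ) 1 := by
    intro u hu
    rw [Metric.mem_ball, Real.dist_eq] at hu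
    obtain ⟨h1, h2⟩ := abs_lt.mp hu
    constructor <;> [linarith; linarith]
  have hmemIoov : ∀ v ∈ Metric.ball v₀ ε, v ∈ Ioo (0:ℝ) 1 ∧ v₀ - ε < v := by
    intro v hv
    rw [Metric.mem_ball, Real.dist_eq] at hv
    obtain ⟨h1, h2⟩ := abs_lt.mp hv
    exact ⟨⟨by linarith, by linarith⟩, by linarith⟩
  have hUsum : ∀ u ∈ Metric.ball u₀ ε, ∀ v ∈ Metric.ball v₀ ε,
      (u+v) ∈ Ioo (0:ℝ) 1 ∧ p (u+v) x y ≠ 0 := by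
    intro u hu v hv
    rw [Metric.mem_ball, Real.dist_eq] at hu hv
    have hmem : u + v ∈ Metric.ball t εU := by
      rw [Metric.mem_ball, Real.dist_eq]
      have : u + v - t = (u - u₀) + (v - v₀) := by rw [hu₀def, hv₀def]; ring
      rw [this]
      calc |(u - u₀) + (v - v₀)| ≤ |u - u₀| + |v - v₀| := abs_add_le _ _
        _ < ε + ε := by gcongr
        _ ≤ εU := by linarith
    exact hballU hmem
  -- upper bounds in convenient form
  have pbound : ∀ u ∈ Ioc (0:ℝ) 1, ∀ a b, p u a b ≤ C₂ * (u ^ (1/α) + ‖a - b‖) ^ (-β) := by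
    intro u hu a b
    have hX : 0 < u ^ (1/α) + ‖a - b‖ := by
      have := Real.rpow_pos_of_pos hu.1 (1/α); positivity
    calc p u a b ≤ C₂ * u / (u ^ (1/α) + ‖a-b‖) ^ β := hupper u hu a b
      _ ≤ C₂ * 1 / (u ^ (1/α) + ‖a-b‖) ^ β := by gcongr; exact hu.2
      _ = C₂ * (u ^ (1/α) + ‖a-b‖) ^ (-β) := by
          rw [Real.rpow_neg hX.le]; ring
  have dbound : ∀ u ∈ Ioc (0:ℝ) 1, ∀ a b,
      |deriv (fun s => p s a b) u| ≤ C₂ * (u ^ (1/α) + ‖a - b‖) ^ (-β) := by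
    intro u hu a b
    have hX : 0 < u ^ (1/α) + ‖a - b‖ := by
      have := Real.rpow_pos_of_pos hu.1 (1/α); positivity
    calc |deriv (fun s => p s a b) u| ≤ C₂ / (u ^ (1/α) + ‖a-b‖) ^ β := hderiv u hu a b
      _ = C₂ * (u ^ (1/α) + ‖a-b‖) ^ (-β) := by
          rw [Real.rpow_neg hX.le]; ring
  -- uniform bound for intermediate derivatives
  have unif : ∀ j : ℕ, 1 ≤ j → j < k → ∀ v ∈ Metric.ball v₀ ε, ∀ z : EuclideanSpace ℝ (Fin d),
      |iteratedDeriv j (fun s => p s z y) v|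
        ≤ K ^ (j+1) * (j:ℝ)^(j:ℕ) * (v₀ - ε) ^ ((1:ℝ) - j) * ((v₀ - ε) ^ (1/α)) ^ (-β) := by
    intro j hj1 hjk v hv z
    obtain ⟨hvI, hvlow⟩ := hmemIoov v hv
    have h1 := IH j hj1 hjk v hvI z y
    have hjR : (1:ℝ) ≤ (j:ℝ) := by exact_mod_cast hj1
    have hXpos : 0 < v ^ (1/α) + ‖z - y‖ := by
      have := Real.rpow_pos_of_pos hvI.1 (1/α); positivity
    have hmpos : (0:ℝ) < (v₀ - ε) ^ (1/α) := Real.rpow_pos_of_pos hv₀me _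
    have e1 : v ^ ((1:ℝ) - j) ≤ (v₀ - ε) ^ ((1:ℝ) - j) :=
      Real.rpow_le_rpow_of_nonpos hv₀me hvlow.le (by linarith)
    have e2 : ((v₀ - ε) ^ (1/α)) ^ β ≤ (v ^ (1/α) + ‖z - y‖) ^ β := by
      apply Real.rpow_le_rpow hmpos.le ?_ hβpos.le
      have h3 : (v₀ - ε) ^ (1/α) ≤ v ^ (1/α) :=
        Real.rpow_le_rpow hv₀me.le hvlow.le (by positivity)
      linarith [norm_nonneg (z - y)]
    refine h1.trans ?_
    rw [Real.rpow_neg hmpos.le]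
    rw [← div_eq_mul_inv]
    calc K ^ (j+1) * (j:ℝ)^(j:ℕ) * v ^ ((1:ℝ) - j) / (v ^ (1/α) + ‖z - y‖) ^ β
        ≤ K ^ (j+1) * (j:ℝ)^(j:ℕ) * (v₀ - ε) ^ ((1:ℝ) - j) / (v ^ (1/α) + ‖z - y‖) ^ β := by
          gcongr
      _ ≤ K ^ (j+1) * (j:ℝ)^(j:ℕ) * (v₀ - ε) ^ ((1:ℝ) - j) / ((v₀ - ε) ^ (1/α)) ^ β := by
          gcongr
  -- smoothness helper
  have smoothIoo : ∀ (z w : EuclideanSpace ℝ (Fin d)),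
      ContDiffOn ℝ (⊤ : ℕ∞) (fun s => p s z w) (Ioo (0:ℝ) 1) :=
    fun z w => (hsmooth z w).mono Ioo_subset_Ioc_self
  have hMnn : ∀ j : ℕ,
      0 ≤ K ^ (j+1) * (j:ℝ)^(j:ℕ) * (v₀ - ε) ^ ((1:ℝ) - j) * ((v₀ - ε) ^ (1/α)) ^ (-β) := by
    intro j
    have h1 : (0:ℝ) < K := by linarith
    positivity
  -- the key measurability-and-identity induction
  have S : ∀ j : ℕ, j + 1 ≤ k →
      ∀ u ∈ Metric.ball u₀ ε, ∀ v ∈ Metric.ball v₀ ε,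
        Integrable (fun z : EuclideanSpace ℝ (Fin d) =>
          p u x z * iteratedDeriv j (fun s => p s z y) v) ∧
        iteratedDeriv j (fun s => p s x y) (u + v)
          = ∫ z : EuclideanSpace ℝ (Fin d), p u x z * iteratedDeriv j (fun s => p s z y) v := by
    intro j
    induction j with
    | zero =>
      intro _ u hu v hv
      have huI := hmemIoo u hu
      have hvI := (hmemIoov v hv).1
      have hsum := hUsum u hu v hv
      have hsg := hsemigroup (u+v) v x y hvI.1 (by linarith [huI.1]) hsum.1.2.le
      rw [show u + v - v = u by ring] at hsg
      simp only [iteratedDeriv_zero]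
      constructor
      · by_contra hni
        rw [integral_undef hni] at hsg
        exact hsum.2 hsg
      · exact hsg
    | succ j hjS =>
      intro hjk u hu v hv
      have hprev := hjS (by omega)
      have huI := hmemIoo u hu
      have hvI := hmemIoov v hv
      have hsum := hUsum u hu v hv
      -- measurability of the new integrand, for every v' in the ball
      have hmeasF' : ∀ v' ∈ Metric.ball v₀ ε, AEStronglyMeasurable
          (fun z : EuclideanSpace ℝ (Fin d) =>
            p u x z * iteratedDeriv (j+1) (fun s => p s z y) v') volume := by
        intro v' hv'
        set c := ε - dist v' v₀ with hcdef
        have hcpos : 0 < c := by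
          have := Metric.mem_ball.mp hv'; rw [hcdef]; linarith
        have hcn : ∀ n : ℕ, 0 < c / ((n:ℝ)+2) := fun n => by positivity
        have hseqb : ∀ n : ℕ, v' + c/((n:ℝ)+2) ∈ Metric.ball v₀ ε := by
          intro n
          rw [Metric.mem_ball]
          have hd1 : dist (v' + c/((n:ℝ)+2)) v' = c/((n:ℝ)+2) := by
            rw [Real.dist_eq, add_sub_cancel_left, abs_of_pos (hcn n)]
          calc dist (v' + c/((n:ℝ)+2)) v₀ ≤ dist (v' + c/((n:ℝ)+2)) v' + dist v' v₀ :=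
                dist_triangle _ _ _
            _ < c + dist v' v₀ := by
                rw [hd1]
                have h2 : c/((n:ℝ)+2) < c := by
                  rw [div_lt_iff₀ (by positivity)]
                  nlinarith
                linarith
            _ = ε := by rw [hcdef]; ring
        have h0 : Tendsto (fun n : ℕ => c/((n:ℝ)+2)) atTop (𝓝 0) := by
          apply Tendsto.div_atTop tendsto_const_nhds
          exact tendsto_atTop_add_const_right _ 2 tendsto_natCast_atTop_atTop
        apply aestronglyMeasurable_of_tendsto_ae (f := fun n : ℕ =>
          fun z : EuclideanSpace ℝ (Fin d) =>
            (c/((n:ℝ)+2))⁻¹ * (p u x z * iteratedDeriv j (fun s => p s z y) (v' + c/((n:ℝ)+2))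
              - p u x z * iteratedDeriv j (fun s => p s z y) v')) atTop
        · intro n
          exact ((hprev u hu _ (hseqb n)).1.aestronglyMeasurable.sub
              (hprev u hu v' hv').1.aestronglyMeasurable).const_mul _
        · refine Eventually.of_forall (fun z => ?_)
          have hdz : HasDerivAt (iteratedDeriv j (fun s => p s z y))
              (iteratedDeriv (j+1) (fun s => p s z y) v') v' :=
            hasDerivAt_iteratedDeriv_open isOpen_Ioo (smoothIoo z y) (hmemIoov v' hv').1 j
          have hslope := hasDerivAt_iff_tendsto_slope.mp hdz
          have hseq0 : Tendsto (fun n : ℕ => v' + c/((n:ℝ)+2)) atTop (𝓝[≠] v') := by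
            apply tendsto_nhdsWithin_of_tendsto_nhds_of_eventually_within
            · have : Tendsto (fun n : ℕ => v' + c/((n:ℝ)+2)) atTop (𝓝 (v' + 0)) :=
                tendsto_const_nhds.add h0
              simpa using this
            · refine Eventually.of_forall (fun n => ?_)
              simp only [mem_compl_iff, mem_singleton_iff]
              exact ne_of_gt (lt_add_of_pos_right v' (hcn n))
          have hcomp := hslope.comp hseq0
          have hres := hcomp.const_mul (p u x z)
          refine Tendsto.congr (fun n => ?_) hres
          have hne' : v' + c/((n:ℝ)+2) - v' ≠ 0 :=
            sub_ne_zero.mpr (ne_of_gt (lt_add_of_pos_right v' (hcn n)))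
          simp only [Function.comp_apply, slope_def_field]
          rw [add_sub_cancel_left]
          ring
      -- apply the dominated-derivative theorem at v
      have hcv : 0 < ε - dist v v₀ := by
        have := Metric.mem_ball.mp hv; linarith
      have hsubball : ∀ v' ∈ Metric.ball v (ε - dist v v₀), v' ∈ Metric.ball v₀ ε := by
        intro v' hv'
        rw [Metric.mem_ball] at hv' ⊢
        calc dist v' v₀ ≤ dist v' v + dist v v₀ := dist_triangle _ _ _
          _ < (ε - dist v v₀) + dist v v₀ := by linarith
          _ = ε := by ring
      have hball_nhds : Metric.ball v₀ ε ∈ 𝓝 v := Metric.isOpen_ball.mem_nhds hv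
      have happ := hasDerivAt_integral_of_dominated_loc_of_deriv_le (μ := volume)
        (F := fun v' (z : EuclideanSpace ℝ (Fin d)) =>
          p u x z * iteratedDeriv j (fun s => p s z y) v')
        (F' := fun v' (z : EuclideanSpace ℝ (Fin d)) =>
          p u x z * iteratedDeriv (j+1) (fun s => p s z y) v')
        (x₀ := v)
        (bound := fun z : EuclideanSpace ℝ (Fin d) =>
          (C₂ * (u ^ (1/α) + ‖x - z‖) ^ (-β)) *
            (K ^ (j+1+1) * ((j+1:ℕ):ℝ)^((j+1:ℕ):ℕ) * (v₀ - ε) ^ ((1:ℝ) - (j+1:ℕ)) *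
              ((v₀ - ε) ^ (1/α)) ^ (-β)))
        (Metric.ball_mem_nhds v hcv)
        (by filter_upwards [hball_nhds] with v' hv'
            exact (hprev u hu v' hv').1.aestronglyMeasurable)
        (hprev u hu v hv).1
        (hmeasF' v hv)
        (by refine Eventually.of_forall (fun z => fun v' hv' => ?_)
            have hv'b := hsubball v' hv'
            have hub := pbound u ⟨huI.1, huI.2.le⟩ x z
            have hdb := unif (j+1) (by omega) (by omega) v' hv'b z
            rw [Real.norm_eq_abs, abs_mul,
              abs_of_nonneg (hlower u ⟨huI.1, huI.2.le⟩ x z)]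
            have h2 : (0:ℝ) < u ^ (1/α) := Real.rpow_pos_of_pos huI.1 _
            exact mul_le_mul hub hdb (abs_nonneg _) (by positivity))
        (((integrable_knl hdβ (Real.rpow_pos_of_pos huI.1 (1/α)) x).const_mul C₂).mul_const _)
        (by refine Eventually.of_forall (fun z => fun v' hv' => ?_)
            have hv'b := hsubball v' hv'
            exact (hasDerivAt_iteratedDeriv_open isOpen_Ioo (smoothIoo z y)
              (hmemIoov v' hv'b).1 j).const_mul (p u x z))
      obtain ⟨hint', hHD⟩ := happ
      have hHD' : HasDerivAt (fun v' => iteratedDeriv j (fun s => p s x y) (u + v'))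
          (∫ z : EuclideanSpace ℝ (Fin d),
            p u x z * iteratedDeriv (j+1) (fun s => p s z y) v) v := by
        apply hHD.congr_of_eventuallyEq
        filter_upwards [hball_nhds] with v' hv'
        exact (hprev u hu v' hv').2
      have hHD2 : HasDerivAt (fun v' => iteratedDeriv j (fun s => p s x y) (u + v'))
          (iteratedDeriv (j+1) (fun s => p s x y) (u+v)) v := by
        have houter := hasDerivAt_iteratedDeriv_open isOpen_Ioo (smoothIoo x y) hsum.1 j
        have hin : HasDerivAt (fun v' : ℝ => u + v') 1 v := by
          simpa using (hasDerivAt_id v).const_add u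
        have := HasDerivAt.comp v houter hin
        rw [mul_one] at this
        exact this
      exact ⟨hint', hHD2.unique hHD'⟩
  -- Step 2: differentiate in u at u₀ with v = v₀ fixed
  have hu₀b : u₀ ∈ Metric.ball u₀ ε := Metric.mem_ball_self hεpos
  have hv₀b : v₀ ∈ Metric.ball v₀ ε := Metric.mem_ball_self hεpos
  have hSk := S (k-1) (by omega)
  have hu₀I := hmemIoo u₀ hu₀b
  have hmemIoou : ∀ u ∈ Metric.ball u₀ ε, u₀ - ε < u := by
    intro u hu
    rw [Metric.mem_ball, Real.dist_eq] at hu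
    have := (abs_lt.mp hu).1
    linarith
  have hmeasG : AEStronglyMeasurable (fun z : EuclideanSpace ℝ (Fin d) =>
      deriv (fun s => p s x z) u₀ * iteratedDeriv (k-1) (fun s => p s z y) v₀) volume := by
    have hcn : ∀ n : ℕ, 0 < ε / ((n:ℝ)+2) := fun n => by positivity
    have hslt : ∀ n : ℕ, ε / ((n:ℝ)+2) < ε := by
      intro n
      rw [div_lt_iff₀ (by positivity)]
      nlinarith [hεpos]
    have hseqb : ∀ n : ℕ, u₀ + ε/((n:ℝ)+2) ∈ Metric.ball u₀ ε := by
      intro n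
      rw [Metric.mem_ball, Real.dist_eq, add_sub_cancel_left, abs_of_pos (hcn n)]
      exact hslt n
    have h0 : Tendsto (fun n : ℕ => ε/((n:ℝ)+2)) atTop (𝓝 0) := by
      apply Tendsto.div_atTop tendsto_const_nhds
      exact tendsto_atTop_add_const_right _ 2 tendsto_natCast_atTop_atTop
    apply aestronglyMeasurable_of_tendsto_ae (f := fun n : ℕ =>
      fun z : EuclideanSpace ℝ (Fin d) =>
        (ε/((n:ℝ)+2))⁻¹ * (p (u₀ + ε/((n:ℝ)+2)) x z * iteratedDeriv (k-1) (fun s => p s z y) v₀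
          - p u₀ x z * iteratedDeriv (k-1) (fun s => p s z y) v₀)) atTop
    · intro n
      exact ((hSk _ (hseqb n) v₀ hv₀b).1.aestronglyMeasurable.sub
          (hSk u₀ hu₀b v₀ hv₀b).1.aestronglyMeasurable).const_mul _
    · refine Eventually.of_forall (fun z => ?_)
      have hdz : HasDerivAt (fun s => p s x z) (deriv (fun s => p s x z) u₀) u₀ := by
        have h := differentiableAt_iteratedDeriv_open isOpen_Ioo (smoothIoo x z) hu₀I 0
        rw [iteratedDeriv_zero] at h
        exact h.hasDerivAt
      have hslope := hasDerivAt_iff_tendsto_slope.mp hdz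
      have hseq0 : Tendsto (fun n : ℕ => u₀ + ε/((n:ℝ)+2)) atTop (𝓝[≠] u₀) := by
        apply tendsto_nhdsWithin_of_tendsto_nhds_of_eventually_within
        · have : Tendsto (fun n : ℕ => u₀ + ε/((n:ℝ)+2)) atTop (𝓝 (u₀ + 0)) :=
            tendsto_const_nhds.add h0
          simpa using this
        · refine Eventually.of_forall (fun n => ?_)
          simp only [mem_compl_iff, mem_singleton_iff]
          exact ne_of_gt (lt_add_of_pos_right u₀ (hcn n))
      have hres := (hslope.comp hseq0).mul_const (iteratedDeriv (k-1) (fun s => p s z y) v₀)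
      refine Tendsto.congr (fun n => ?_) hres
      simp only [Function.comp_apply, slope_def_field]
      rw [add_sub_cancel_left]
      ring
  have happ2 := hasDerivAt_integral_of_dominated_loc_of_deriv_le (μ := volume)
    (F := fun u' (z : EuclideanSpace ℝ (Fin d)) =>
      p u' x z * iteratedDeriv (k-1) (fun s => p s z y) v₀)
    (F' := fun u' (z : EuclideanSpace ℝ (Fin d)) =>
      deriv (fun s => p s x z) u' * iteratedDeriv (k-1) (fun s => p s z y) v₀)
    (x₀ := u₀)
    (bound := fun z : EuclideanSpace ℝ (Fin d) =>
      (C₂ * ((u₀ - ε) ^ (1/α) + ‖x - z‖) ^ (-β)) *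
        (K ^ (k-1+1) * ((k-1:ℕ):ℝ)^((k-1:ℕ)) * (v₀ - ε) ^ ((1:ℝ) - (k-1:ℕ)) *
          ((v₀ - ε) ^ (1/α)) ^ (-β)))
    (Metric.ball_mem_nhds u₀ hεpos)
    (by filter_upwards [Metric.isOpen_ball.mem_nhds hu₀b] with u' hu'
        exact (hSk u' hu' v₀ hv₀b).1.aestronglyMeasurable)
    (hSk u₀ hu₀b v₀ hv₀b).1
    hmeasG
    (by refine Eventually.of_forall (fun z => fun u' hu' => ?_)
        have hu'I := hmemIoo u' hu'
        have hdb := dbound u' ⟨hu'I.1, hu'I.2.le⟩ x z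
        have hunif := unif (k-1) (by omega) (by omega) v₀ hv₀b z
        rw [Real.norm_eq_abs, abs_mul]
        have hm0 : (0:ℝ) < (u₀ - ε) ^ (1/α) := Real.rpow_pos_of_pos hu₀me _
        have hmono : (u' ^ (1/α) + ‖x - z‖) ^ (-β) ≤ ((u₀ - ε) ^ (1/α) + ‖x - z‖) ^ (-β) := by
          apply Real.rpow_le_rpow_of_nonpos (by positivity) ?_ (by linarith)
          have h3 : (u₀ - ε) ^ (1/α) ≤ u' ^ (1/α) :=
            Real.rpow_le_rpow hu₀me.le (hmemIoou u' hu').le (by positivity)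
          linarith
        have hd2 : |deriv (fun s => p s x z) u'| ≤ C₂ * ((u₀-ε) ^ (1/α) + ‖x - z‖) ^ (-β) :=
          hdb.trans (mul_le_mul_of_nonneg_left hmono hC₂.le)
        exact mul_le_mul hd2 hunif (abs_nonneg _) (by positivity))
    (((integrable_knl hdβ (Real.rpow_pos_of_pos hu₀me (1/α)) x).const_mul C₂).mul_const _)
    (by refine Eventually.of_forall (fun z => fun u' hu' => ?_)
        have hu'I := hmemIoo u' hu'
        have h := differentiableAt_iteratedDeriv_open isOpen_Ioo (smoothIoo x z) hu'I 0
        rw [iteratedDeriv_zero] at h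
        exact h.hasDerivAt.mul_const _)
  obtain ⟨hint2, hHD⟩ := happ2
  have hHD' : HasDerivAt (fun u' => iteratedDeriv (k-1) (fun s => p s x y) (u' + v₀))
      (∫ z : EuclideanSpace ℝ (Fin d),
        deriv (fun s => p s x z) u₀ * iteratedDeriv (k-1) (fun s => p s z y) v₀) u₀ := by
    apply hHD.congr_of_eventuallyEq
    filter_upwards [Metric.isOpen_ball.mem_nhds hu₀b] with u' hu'
    exact (hSk u' hu' v₀ hv₀b).2
  have hHD2 : HasDerivAt (fun u' => iteratedDeriv (k-1) (fun s => p s x y) (u' + v₀))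
      (iteratedDeriv k (fun s => p s x y) t) u₀ := by
    have hsumI : u₀ + v₀ ∈ Ioo (0:ℝ) 1 := by rw [huv₀]; exact ⟨ht0, ht1⟩
    have houter := hasDerivAt_iteratedDeriv_open isOpen_Ioo (smoothIoo x y) hsumI (k-1)
    have hin : HasDerivAt (fun u' : ℝ => u' + v₀) 1 u₀ := by
      simpa using (hasDerivAt_id u₀).add_const v₀
    have hcomp := HasDerivAt.comp u₀ houter hin
    rw [show k - 1 + 1 = k by omega, huv₀, mul_one] at hcomp
    exact hcomp
  have hEQ : iteratedDeriv k (fun s => p s x y) t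
      = ∫ z : EuclideanSpace ℝ (Fin d),
          deriv (fun s => p s x z) u₀ * iteratedDeriv (k-1) (fun s => p s z y) v₀ :=
    hHD2.unique hHD'
  -- Step 3: estimates
  have hKpos : (0:ℝ) < K := lt_of_lt_of_le one_pos hK1
  have hv₀lt1 : v₀ < 1 := lt_trans hv₀lt ht1
  have hu₀r : 0 < u₀ ^ (1/α) := Real.rpow_pos_of_pos hu₀ _
  have hv₀r : 0 < v₀ ^ (1/α) := Real.rpow_pos_of_pos hv₀pos _
  set r := ‖x - y‖ with hrdef
  have hr0 : (0:ℝ) ≤ r := norm_nonneg _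
  set A := K ^ (k-1+1) * ((k-1:ℕ):ℝ)^((k-1:ℕ)) * v₀ ^ ((1:ℝ) - ((k-1:ℕ):ℝ)) with hAdef
  have hA0 : (0:ℝ) ≤ A := by positivity
  set W := fun z : EuclideanSpace ℝ (Fin d) =>
    (C₂ * (u₀ ^ (1/α) + ‖x - z‖) ^ (-β)) * (A * (v₀ ^ (1/α) + ‖z - y‖) ^ (-β)) with hWdef
  have hWpt : ∀ z : EuclideanSpace ℝ (Fin d),
      ‖deriv (fun s => p s x z) u₀ * iteratedDeriv (k-1) (fun s => p s z y) v₀‖ ≤ W z := by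
    intro z
    rw [Real.norm_eq_abs, abs_mul]
    have h1 := dbound u₀ ⟨hu₀I.1, hu₀I.2.le⟩ x z
    have h2 := IH (k-1) (by omega) (by omega) v₀ ⟨hv₀pos, hv₀lt1⟩ z y
    have hXz : 0 < v₀ ^ (1/α) + ‖z - y‖ := by positivity
    have h2' : |iteratedDeriv (k-1) (fun s => p s z y) v₀|
        ≤ A * (v₀ ^ (1/α) + ‖z - y‖) ^ (-β) := by
      rw [Real.rpow_neg hXz.le, hAdef, ← div_eq_mul_inv]
      exact h2
    exact mul_le_mul h1 h2' (abs_nonneg _) (by positivity)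
  have hkernu : Integrable (fun z : EuclideanSpace ℝ (Fin d) =>
      (u₀ ^ (1/α) + ‖x - z‖) ^ (-β)) := integrable_knl hdβ hu₀r x
  have hkernv : Integrable (fun z : EuclideanSpace ℝ (Fin d) =>
      (v₀ ^ (1/α) + ‖z - y‖) ^ (-β)) := by
    have h := integrable_knl hdβ hv₀r y
    have heq : (fun z : EuclideanSpace ℝ (Fin d) => (v₀ ^ (1/α) + ‖z - y‖) ^ (-β))
        = fun z => (v₀ ^ (1/α) + ‖y - z‖) ^ (-β) := by
      funext z; rw [norm_sub_rev]
    rw [heq]; exact h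
  have hWnn : ∀ z : EuclideanSpace ℝ (Fin d), 0 ≤ W z := by
    intro z
    have : 0 < u₀ ^ (1/α) := hu₀r
    have : 0 < v₀ ^ (1/α) := hv₀r
    positivity
  have hWle : ∀ z : EuclideanSpace ℝ (Fin d),
      W z ≤ (C₂ * (u₀ ^ (1/α) + ‖x - z‖) ^ (-β)) * (A * (v₀ ^ (1/α)) ^ (-β)) := by
    intro z
    have h1 : (v₀ ^ (1/α) + ‖z - y‖) ^ (-β) ≤ (v₀ ^ (1/α)) ^ (-β) :=
      Real.rpow_le_rpow_of_nonpos hv₀r (by linarith [norm_nonneg (z - y)]) (by linarith)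
    have h0 : (0:ℝ) ≤ C₂ * (u₀ ^ (1/α) + ‖x - z‖) ^ (-β) := by positivity
    exact mul_le_mul_of_nonneg_left (mul_le_mul_of_nonneg_left h1 hA0) h0
  have hWcont : Continuous W := by
    apply Continuous.mul
    · apply Continuous.mul continuous_const
      apply Continuous.rpow_const
      · exact continuous_const.add ((continuous_const.sub continuous_id).norm)
      · intro z
        left
        have : (0:ℝ) < u₀ ^ (1/α) + ‖x - z‖ := by positivity
        exact ne_of_gt this
    · apply Continuous.mul continuous_const
      apply Continuous.rpow_const
      · exact continuous_const.add ((continuous_id.sub continuous_const).norm)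
      · intro z
        left
        have : (0:ℝ) < v₀ ^ (1/α) + ‖z - y‖ := by positivity
        exact ne_of_gt this
  have hWInt : Integrable W := by
    refine ((hkernu.const_mul C₂).mul_const (A * (v₀ ^ (1/α)) ^ (-β))).mono'
      hWcont.aestronglyMeasurable ?_
    refine Eventually.of_forall fun z => ?_
    rw [Real.norm_eq_abs, abs_of_nonneg (hWnn z)]
    exact hWle z
  have hstep : |iteratedDeriv k (fun s => p s x y) t| ≤ ∫ z : EuclideanSpace ℝ (Fin d), W z := by
    rw [hEQ]
    calc |∫ z : EuclideanSpace ℝ (Fin d),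
          deriv (fun s => p s x z) u₀ * iteratedDeriv (k-1) (fun s => p s z y) v₀|
        ≤ ∫ z : EuclideanSpace ℝ (Fin d),
            ‖deriv (fun s => p s x z) u₀ * iteratedDeriv (k-1) (fun s => p s z y) v₀‖ := by
          rw [← Real.norm_eq_abs]
          exact norm_integral_le_integral_norm _
      _ ≤ ∫ z : EuclideanSpace ℝ (Fin d), W z := integral_mono hint2.norm hWInt hWpt
  have hJnn : 0 ≤ J := by
    rw [hJ]
    exact integral_nonneg (fun w => by positivity)
  have hIu : ∫ z : EuclideanSpace ℝ (Fin d), (u₀ ^ (1/α) + ‖x - z‖) ^ (-β)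
      = (u₀ ^ (1/α)) ^ ((d:ℝ) - β) * J := by
    rw [hJ]; exact integral_knl_eq hdβ hu₀r x
  have hIv : ∫ z : EuclideanSpace ℝ (Fin d), (v₀ ^ (1/α) + ‖z - y‖) ^ (-β)
      = (v₀ ^ (1/α)) ^ ((d:ℝ) - β) * J := by
    rw [hJ]
    have heq : (fun z : EuclideanSpace ℝ (Fin d) => (v₀ ^ (1/α) + ‖z - y‖) ^ (-β))
        = fun z => (v₀ ^ (1/α) + ‖y - z‖) ^ (-β) := by
      funext z; rw [norm_sub_rev]
    rw [heq]; exact integral_knl_eq hdβ hv₀r y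
  rcases le_or_gt r (t ^ (1/α)) with hcase | hcase
  · -- CASE A : on-diagonal
    have hWle2 : ∫ z : EuclideanSpace ℝ (Fin d), W z
        ≤ C₂ * ((u₀ ^ (1/α)) ^ ((d:ℝ) - β) * J) * (A * (v₀ ^ (1/α)) ^ (-β)) := by
      calc ∫ z : EuclideanSpace ℝ (Fin d), W z
          ≤ ∫ z : EuclideanSpace ℝ (Fin d),
              (C₂ * (u₀ ^ (1/α) + ‖x - z‖) ^ (-β)) * (A * (v₀ ^ (1/α)) ^ (-β)) :=
            integral_mono hWInt ((hkernu.const_mul C₂).mul_const _) hWle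
        _ = C₂ * (∫ z : EuclideanSpace ℝ (Fin d), (u₀ ^ (1/α) + ‖x - z‖) ^ (-β))
              * (A * (v₀ ^ (1/α)) ^ (-β)) := by
            rw [integral_mul_const, integral_const_mul]
        _ = C₂ * ((u₀ ^ (1/α)) ^ ((d:ℝ) - β) * J) * (A * (v₀ ^ (1/α)) ^ (-β)) := by rw [hIu]
    refine hstep.trans (hWle2.trans ?_)
    exact caseA_arith hk hα ht0 ht1 hC₂ hJnn hK1 hKA hr0 hcase
  · -- CASE B : off-diagonal
    have htr : 0 < t ^ (1/α) := Real.rpow_pos_of_pos ht0 _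
    have hrpos : 0 < r := lt_trans htr hcase
    have hr2 : 0 < r/2 := by linarith
    set s₁ : Set (EuclideanSpace ℝ (Fin d)) := {z | r/2 ≤ ‖x - z‖} with hs₁def
    have hs₁ : MeasurableSet s₁ :=
      (isClosed_le continuous_const ((continuous_const.sub continuous_id).norm)).measurableSet
    have hsplit : ∫ z : EuclideanSpace ℝ (Fin d), W z
        = (∫ z in s₁, W z) + ∫ z in s₁ᶜ, W z := (integral_add_compl hs₁ hWInt).symm
    set W₁ := fun z : EuclideanSpace ℝ (Fin d) =>
      (C₂ * (r/2) ^ (-β)) * (A * (v₀ ^ (1/α) + ‖z - y‖) ^ (-β)) with hW₁def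
    set W₂ := fun z : EuclideanSpace ℝ (Fin d) =>
      (C₂ * (u₀ ^ (1/α) + ‖x - z‖) ^ (-β)) * (A * (r/2) ^ (-β)) with hW₂def
    have hW₁Int : Integrable W₁ := (hkernv.const_mul _).const_mul _
    have hW₂Int : Integrable W₂ := (hkernu.const_mul C₂).mul_const _
    have hbound1 : ∫ z in s₁, W z ≤ (C₂ * (r/2) ^ (-β)) * (A * ((v₀ ^ (1/α)) ^ ((d:ℝ) - β) * J)) := by
      have hmono : ∀ z ∈ s₁, W z ≤ W₁ z := by
        intro z hz
        have hz' : r/2 ≤ ‖x - z‖ := hz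
        have h1 : (u₀ ^ (1/α) + ‖x - z‖) ^ (-β) ≤ (r/2) ^ (-β) :=
          Real.rpow_le_rpow_of_nonpos hr2 (by linarith [hu₀r.le]) (by linarith)
        have h0 : (0:ℝ) ≤ A * (v₀ ^ (1/α) + ‖z - y‖) ^ (-β) := by positivity
        rw [hWdef, hW₁def]
        exact mul_le_mul_of_nonneg_right (mul_le_mul_of_nonneg_left h1 hC₂.le) h0
      calc ∫ z in s₁, W z ≤ ∫ z in s₁, W₁ z :=
            setIntegral_mono_on hWInt.integrableOn hW₁Int.integrableOn hs₁ hmono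
        _ ≤ ∫ z : EuclideanSpace ℝ (Fin d), W₁ z :=
            setIntegral_le_integral hW₁Int (Eventually.of_forall fun z => by
              have := hv₀r; positivity)
        _ = (C₂ * (r/2) ^ (-β)) * (A * ((v₀ ^ (1/α)) ^ ((d:ℝ) - β) * J)) := by
            rw [hW₁def]
            simp only [integral_const_mul]
            rw [hIv]
    have hbound2 : ∫ z in s₁ᶜ, W z
        ≤ C₂ * ((u₀ ^ (1/α)) ^ ((d:ℝ) - β) * J) * (A * (r/2) ^ (-β)) := by
      have hmono : ∀ z ∈ s₁ᶜ, W z ≤ W₂ z := by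
        intro z hz
        have hz' : ‖x - z‖ < r/2 := by
          simp only [hs₁def, mem_compl_iff, mem_setOf_eq, not_le] at hz
          exact hz
        have htri : r ≤ ‖x - z‖ + ‖z - y‖ := by
          calc r = ‖(x - z) + (z - y)‖ := by rw [sub_add_sub_cancel]
            _ ≤ ‖x - z‖ + ‖z - y‖ := norm_add_le _ _
        have hzy : r/2 ≤ ‖z - y‖ := by linarith
        have h1 : (v₀ ^ (1/α) + ‖z - y‖) ^ (-β) ≤ (r/2) ^ (-β) :=
          Real.rpow_le_rpow_of_nonpos hr2 (by linarith [hv₀r.le]) (by linarith)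
        have h0 : (0:ℝ) ≤ C₂ * (u₀ ^ (1/α) + ‖x - z‖) ^ (-β) := by
          have := hu₀r; positivity
        rw [hWdef, hW₂def]
        exact mul_le_mul_of_nonneg_left (mul_le_mul_of_nonneg_left h1 hA0) h0
      calc ∫ z in s₁ᶜ, W z ≤ ∫ z in s₁ᶜ, W₂ z :=
            setIntegral_mono_on hWInt.integrableOn hW₂Int.integrableOn hs₁.compl hmono
        _ ≤ ∫ z : EuclideanSpace ℝ (Fin d), W₂ z :=
            setIntegral_le_integral hW₂Int (Eventually.of_forall fun z => by
              have := hu₀r; positivity)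
        _ = C₂ * ((u₀ ^ (1/α)) ^ ((d:ℝ) - β) * J) * (A * (r/2) ^ (-β)) := by
            rw [hW₂def, integral_mul_const, integral_const_mul, hIu]
    refine hstep.trans ?_
    rw [hsplit]
    have htot := add_le_add hbound1 hbound2
    refine le_trans htot ?_
    exact caseB_arith hk hα ht0 ht1 hC₂ hJnn hK1 hKB hcase

/-- Higher-order time derivative estimates for a fractional-heat-type kernel
from the semigroup property, the on-diagonal/off-diagonal upper bound, and the
first time-derivative bound. -/
theorem stmt7 (d : ℕ) (hd : 0 < d) (α : ℝ) (hα : 0 < α) (hα2 : α < 2)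
    (p : ℝ → EuclideanSpace ℝ (Fin d) → EuclideanSpace ℝ (Fin d) → ℝ)
    (C₂ : ℝ) (hC₂ : 0 < C₂)
    (hsmooth : ∀ x y, ContDiffOn ℝ (⊤ : ℕ∞) (fun t => p t x y) (Ioc (0:ℝ) 1))
    (hsemigroup : ∀ (t τ : ℝ) (x y : EuclideanSpace ℝ (Fin d)),
      0 < τ → τ < t → t ≤ 1 →
      p t x y = ∫ z : EuclideanSpace ℝ (Fin d), p (t - τ) x z * p τ z y)
    (hlower : ∀ t ∈ Ioc (0:ℝ) 1, ∀ x y, 0 ≤ p t x y)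
    (hupper : ∀ t ∈ Ioc (0:ℝ) 1, ∀ x y,
      p t x y ≤ C₂ * t / (t ^ (1/α) + ‖x - y‖) ^ ((d : ℝ) + α))
    (hderiv : ∀ t ∈ Ioc (0:ℝ) 1, ∀ x y,
      |deriv (fun s => p s x y) t| ≤ C₂ / (t ^ (1/α) + ‖x - y‖) ^ ((d : ℝ) + α)) :
    ∃ C > 0, ∀ (k : ℕ), 1 ≤ k → ∀ t ∈ Ioc (0:ℝ) 1, ∀ x y,
      |iteratedDeriv k (fun s => p s x y) t|
        ≤ C ^ (k + 1) * (k : ℝ) ^ (k : ℕ) * t ^ ((1 : ℝ) - k)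
            / (t ^ (1/α) + ‖x - y‖) ^ ((d : ℝ) + α) := by
  have hβpos : (0:ℝ) < (d:ℝ) + α := by positivity
  set J := ∫ w : EuclideanSpace ℝ (Fin d), ((1:ℝ) + ‖w‖) ^ (-((d:ℝ)+α)) with hJ
  have hJnn : 0 ≤ J := integral_nonneg (fun w => by positivity)
  set K := 1 + C₂ + C₂*J*2^(((d:ℝ)+α)*(1+1/α)) + 2*(C₂*J*4^((d:ℝ)+α)) with hKdef
  have h2p : (0:ℝ) < 2^(((d:ℝ)+α)*(1+1/α)) := Real.rpow_pos_of_pos (by norm_num) _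
  have h4p : (0:ℝ) < 4^((d:ℝ)+α) := Real.rpow_pos_of_pos (by norm_num) _
  have hterm1 : (0:ℝ) ≤ C₂*J*2^(((d:ℝ)+α)*(1+1/α)) := by positivity
  have hterm2 : (0:ℝ) ≤ 2*(C₂*J*4^((d:ℝ)+α)) := by positivity
  have hK1 : 1 ≤ K := by rw [hKdef]; linarith
  have hKpos : (0:ℝ) < K := by linarith
  have hKC : C₂ ≤ K := by rw [hKdef]; linarith
  have hKA : C₂*J*2^(((d:ℝ)+α)*(1+1/α)) ≤ K := by rw [hKdef]; linarith
  have hKB : 2*(C₂*J*4^((d:ℝ)+α)) ≤ K := by rw [hKdef]; linarith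
  have smoothIoo : ∀ (z w : EuclideanSpace ℝ (Fin d)),
      ContDiffOn ℝ (⊤ : ℕ∞) (fun s => p s z w) (Ioo (0:ℝ) 1) :=
    fun z w => (hsmooth z w).mono Ioo_subset_Ioc_self
  -- base case valid on all of Ioc
  have base : ∀ t ∈ Ioc (0:ℝ) 1, ∀ x y : EuclideanSpace ℝ (Fin d),
      |iteratedDeriv 1 (fun s => p s x y) t|
        ≤ K ^ (1+1) * ((1:ℕ):ℝ)^(1:ℕ) * t ^ ((1:ℝ) - (1:ℕ))
            / (t ^ (1/α) + ‖x - y‖) ^ ((d:ℝ)+α) := by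
    intro t ht x y
    have hD : 0 < (t ^ (1/α) + ‖x - y‖) ^ ((d:ℝ)+α) := by
      have := Real.rpow_pos_of_pos ht.1 (1/α)
      positivity
    have h := hderiv t ht x y
    rw [iteratedDeriv_one]
    refine h.trans ?_
    have hnum : K ^ (1+1) * ((1:ℕ):ℝ)^(1:ℕ) * t ^ ((1:ℝ) - (1:ℕ)) = K^2 := by
      norm_num [Real.rpow_zero]
    rw [hnum]
    have hCK : C₂ ≤ K^2 := by nlinarith
    exact (div_le_div_iff_of_pos_right hD).mpr hCK
  -- interior bound for all orders
  have main : ∀ k : ℕ, 1 ≤ k → ∀ t ∈ Ioo (0:ℝ) 1, ∀ x y : EuclideanSpace ℝ (Fin d),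
      |iteratedDeriv k (fun s => p s x y) t|
        ≤ K ^ (k+1) * (k:ℝ)^(k:ℕ) * t ^ ((1:ℝ) - k)
            / (t ^ (1/α) + ‖x - y‖) ^ ((d:ℝ)+α) := by
    intro k
    induction k using Nat.strong_induction_on with
    | _ k IH =>
      intro hk1 t ht x y
      rcases eq_or_lt_of_le hk1 with hk1' | hk2
      · -- k = 1
        subst hk1'
        exact base t ⟨ht.1, ht.2.le⟩ x y
      · -- k ≥ 2
        have hk2' : 2 ≤ k := hk2
        have IH' : ∀ j : ℕ, 1 ≤ j → j < k → ∀ v ∈ Ioo (0:ℝ) 1, ∀ z w,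
            |iteratedDeriv j (fun s => p s z w) v|
              ≤ K ^ (j+1) * (j:ℝ)^(j:ℕ) * v ^ ((1:ℝ) - j)
                  / (v ^ (1/α) + ‖z - w‖) ^ ((d:ℝ)+α) :=
          fun j hj1 hjk v hv z w => IH j hjk hj1 v hv z w
        by_cases hne : p t x y = 0
        · -- p vanishes at t
          by_cases hloc : ∀ᶠ s in 𝓝 t, p s x y = 0
          · have hzero : ∀ m : ℕ, iteratedDeriv m (fun _ : ℝ => (0:ℝ)) = fun _ => 0 := by
              intro m
              induction m with
              | zero => simp
              | succ m ihm => rw [iteratedDeriv_succ, ihm]; funext s; simp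
            have heq : iteratedDeriv k (fun s => p s x y) t
                = iteratedDeriv k (fun _ : ℝ => (0:ℝ)) t :=
              Filter.EventuallyEq.iteratedDeriv_eq k hloc
            rw [heq, hzero k]
            simp only [abs_zero]
            have hD : 0 < (t ^ (1/α) + ‖x - y‖) ^ ((d:ℝ)+α) := by
              have := Real.rpow_pos_of_pos ht.1 (1/α)
              positivity
            have ht1k : (0:ℝ) < t ^ ((1:ℝ) - (k:ℕ)) := Real.rpow_pos_of_pos ht.1 _
            positivity
          · -- cluster point of nonzero set
            set S := {s : ℝ | s ∈ Ioo (0:ℝ) 1 ∧ p s x y ≠ 0} with hSdef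
            have hfreq : ∃ᶠ s in 𝓝 t, p s x y ≠ 0 := Filter.not_eventually.mp hloc
            have hfreqS : ∃ᶠ s in 𝓝 t, s ∈ S := by
              refine (hfreq.and_eventually (Ioo_mem_nhds ht.1 ht.2)).mono ?_
              intro s hs
              exact ⟨hs.2, hs.1⟩
            have hclos : t ∈ closure S := mem_closure_iff_frequently.mpr hfreqS
            haveI hNB : (𝓝[S] t).NeBot := mem_closure_iff_nhdsWithin_neBot.mp hclos
            have hcontL : ContinuousAt (fun s => |iteratedDeriv k (fun s' => p s' x y) s|) t :=
              ((differentiableAt_iteratedDeriv_open isOpen_Ioo (smoothIoo x y) ht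
                k).continuousAt).abs
            have hDt : (0:ℝ) < t ^ (1/α) + ‖x - y‖ := by
              have := Real.rpow_pos_of_pos ht.1 (1/α)
              positivity
            have hcontR : ContinuousAt (fun s : ℝ =>
                K ^ (k+1) * (k:ℝ)^(k:ℕ) * s ^ ((1:ℝ) - k)
                  / (s ^ (1/α) + ‖x - y‖) ^ ((d:ℝ)+α)) t := by
              have h1 : ContinuousAt (fun s : ℝ => s ^ ((1:ℝ) - (k:ℕ))) t :=
                Real.continuousAt_rpow_const t _ (Or.inl (ne_of_gt ht.1))
              have h2 : ContinuousAt (fun s : ℝ => s ^ (1/α)) t :=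
                Real.continuousAt_rpow_const t _ (Or.inl (ne_of_gt ht.1))
              have h3 : ContinuousAt (fun s : ℝ => (s ^ (1/α) + ‖x - y‖) ^ ((d:ℝ)+α)) t :=
                ContinuousAt.rpow_const (h2.add continuousAt_const) (Or.inl (ne_of_gt hDt))
              exact (continuousAt_const.mul h1).div h3
                (ne_of_gt (Real.rpow_pos_of_pos hDt _))
            have hboundS : ∀ s ∈ S, |iteratedDeriv k (fun s' => p s' x y) s|
                ≤ K ^ (k+1) * (k:ℝ)^(k:ℕ) * s ^ ((1:ℝ) - k)
                    / (s ^ (1/α) + ‖x - y‖) ^ ((d:ℝ)+α) := by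
              intro s hs
              exact core_step hα hC₂ hsmooth hsemigroup hlower hupper hderiv hJ hK1 hKA hKB
                hk2' IH' hs.1 hs.2
            have hTL : Tendsto (fun s => |iteratedDeriv k (fun s' => p s' x y) s|) (𝓝[S] t)
                (𝓝 (|iteratedDeriv k (fun s' => p s' x y) t|)) :=
              hcontL.continuousWithinAt.tendsto
            have hTR : Tendsto (fun s : ℝ =>
                K ^ (k+1) * (k:ℝ)^(k:ℕ) * s ^ ((1:ℝ) - k)
                  / (s ^ (1/α) + ‖x - y‖) ^ ((d:ℝ)+α)) (𝓝[S] t)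
                (𝓝 (K ^ (k+1) * (k:ℝ)^(k:ℕ) * t ^ ((1:ℝ) - k)
                  / (t ^ (1/α) + ‖x - y‖) ^ ((d:ℝ)+α))) :=
              hcontR.continuousWithinAt.tendsto
            refine le_of_tendsto_of_tendsto hTL hTR ?_
            filter_upwards [eventually_mem_nhdsWithin] with s hs
            exact hboundS s hs
        · exact core_step hα hC₂ hsmooth hsemigroup hlower hupper hderiv hJ hK1 hKA hKB
            hk2' IH' ht hne
  refine ⟨K, hKpos, ?_⟩
  intro k hk t ht x y
  rcases eq_or_lt_of_le hk with hk1' | hk2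
  · subst hk1'
    exact base t ht x y
  · have hk2' : 2 ≤ k := hk2
    rcases lt_or_eq_of_le ht.2 with ht1 | ht1
    · exact main k hk t ⟨ht.1, ht1⟩ x y
    · -- boundary case t = 1
      subst ht1
      have hgq : iteratedDeriv k (fun s => p s x y) 1
          = deriv (iteratedDeriv (k-1) (fun s => p s x y)) 1 := by
        conv_lhs => rw [show k = k-1+1 by omega]
        rw [iteratedDeriv_succ]
      set g := iteratedDeriv (k-1) (fun s => p s x y) with hgdef
      set R := fun s : ℝ => K^(k+1)*(k:ℝ)^(k:ℕ) * s^((1:ℝ)-(k:ℕ))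
        / (s^(1/α)+‖x-y‖)^((d:ℝ)+α) with hRdef
      have hD1 : (0:ℝ) < (1:ℝ)^(1/α) + ‖x - y‖ := by
        rw [Real.one_rpow]
        positivity
      have hR1pos : (0:ℝ) < R 1 := by
        rw [hRdef]
        simp only
        have h1 : (0:ℝ) < (1:ℝ)^((1:ℝ)-(k:ℕ)) := Real.rpow_pos_of_pos one_pos _
        have h2 : (0:ℝ) < ((1:ℝ)^(1/α)+‖x-y‖)^((d:ℝ)+α) := Real.rpow_pos_of_pos hD1 _
        positivity
      show |iteratedDeriv k (fun s => p s x y) 1| ≤ R 1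
      rw [hgq]
      by_cases hdif : DifferentiableAt ℝ g 1
      · refine le_of_forall_pos_le_add ?_
        intro ε' hε'
        have hcontR : ContinuousAt R 1 := by
          have h1 : ContinuousAt (fun s : ℝ => s ^ ((1:ℝ) - (k:ℕ))) 1 :=
            Real.continuousAt_rpow_const 1 _ (Or.inl one_ne_zero)
          have h2 : ContinuousAt (fun s : ℝ => s ^ (1/α)) 1 :=
            Real.continuousAt_rpow_const 1 _ (Or.inl one_ne_zero)
          have h3 : ContinuousAt (fun s : ℝ => (s ^ (1/α) + ‖x - y‖) ^ ((d:ℝ)+α)) 1 :=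
            ContinuousAt.rpow_const (h2.add continuousAt_const) (Or.inl (ne_of_gt hD1))
          exact (continuousAt_const.mul h1).div h3
            (ne_of_gt (Real.rpow_pos_of_pos hD1 _))
        have hev : ∀ᶠ s in 𝓝 (1:ℝ), R s < R 1 + ε' :=
          hcontR.tendsto.eventually_lt_const (by linarith)
        obtain ⟨δ, hδpos, hδ⟩ := Metric.eventually_nhds_iff.mp hev
        have hd := hdif.hasDerivAt
        have hslope := hasDerivAt_iff_tendsto_slope.mp hd
        have hmono : 𝓝[Iio (1:ℝ)] 1 ≤ 𝓝[≠] (1:ℝ) :=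
          nhdsWithin_mono _ (fun s hs => ne_of_lt hs)
        have hslope' : Tendsto (slope g 1) (𝓝[Iio (1:ℝ)] 1) (𝓝 (deriv g 1)) :=
          hslope.mono_left hmono
        refine le_of_tendsto hslope'.abs ?_
        have hmem1 : (1:ℝ) ∈ Ioc (max (1/2) (1-δ)) 1 := by
          constructor
          · rw [max_lt_iff]
            constructor <;> [norm_num; linarith]
          · exact le_refl 1
        filter_upwards [Ioo_mem_nhdsLT_of_mem hmem1] with s hs
        have hs2 : (1/2:ℝ) < s := lt_of_le_of_lt (le_max_left _ _) hs.1
        have hs3 : 1 - δ < s := lt_of_le_of_lt (le_max_right _ _) hs.1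
        have hs4 : s < 1 := hs.2
        have hcont : ContinuousOn g (Icc s 1) := by
          intro c hc
          rcases eq_or_lt_of_le hc.2 with hc1 | hc1
          · rw [hc1]
            exact hdif.continuousAt.continuousWithinAt
          · exact ((differentiableAt_iteratedDeriv_open isOpen_Ioo (smoothIoo x y)
              (⟨by linarith [hc.1], hc1⟩ : c ∈ Ioo (0:ℝ) 1) (k-1)).continuousAt).continuousWithinAt
        have hder : ∀ c ∈ Ioo s 1, HasDerivAt g (iteratedDeriv k (fun s' => p s' x y) c) c := by
          intro c hc
          have h := hasDerivAt_iteratedDeriv_open isOpen_Ioo (smoothIoo x y)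
            (⟨by linarith [hc.1], hc.2⟩ : c ∈ Ioo (0:ℝ) 1) (k-1)
          rwa [show k-1+1 = k by omega] at h
        obtain ⟨c, hcmem, hceq⟩ := exists_hasDerivAt_eq_slope g _ hs4 hcont hder
        have hslope_eq : slope g 1 s = iteratedDeriv k (fun s' => p s' x y) c := by
          rw [slope_def_field, hceq]
          have h1 : s - 1 ≠ 0 := sub_ne_zero.mpr (ne_of_lt hs4)
          have h2 : (1:ℝ) - s ≠ 0 := sub_ne_zero.mpr (ne_of_gt hs4)
          field_simp
          ring
        rw [hslope_eq]
        have hcIoo : c ∈ Ioo (0:ℝ) 1 := ⟨by linarith [hcmem.1], hcmem.2⟩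
        have hbound := main k hk c hcIoo x y
        refine hbound.trans ?_
        have hRc : R c < R 1 + ε' := by
          apply hδ
          rw [Real.dist_eq, abs_of_nonpos (by linarith [hcmem.2] : c - 1 ≤ 0)]
          have := hcmem.1
          linarith
        exact le_of_lt hRc
      · rw [deriv_zero_of_not_differentiableAt hdif, abs_zero]
        exact hR1pos.le
end

section
/- Let α ∈ (0,2), ε ∈ (0,α), and suppose u : (0,∞) × M → ℝ is given by u(t,x) = ∫_M p_α(t,x;y) u(0,y) dy where |u(0,y)| ≤ C(1 + d(y,0)^{α-ε}) and p_α is the subordinated heat kernel on a manifold satisfying Gaussian bounds and doubling. Then |u(t,x)| ≤ C'(1 + d(x,0)^{α-ε}) + C' t^{(α-ε)/α} for all (t,x) ∈ (0,∞) × M, for a constant C' depending only on C, α, ε and the structural constants. -/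
open Real MeasureTheory Set Metric

set_option maxHeartbeats 1000000

private lemma exp_pow_aux {δ x : ℝ} (n : ℕ) (hδ : 0 < δ) (hx : 0 < x) :
    Real.exp (-(δ * x)) ≤ ((n : ℝ) / δ) ^ n / x ^ n := by
  have h1 : (δ * x / n) ^ n ≤ Real.exp (δ * x) := by
    rcases Nat.eq_zero_or_pos n with hn | hn
    · simpa [hn] using Real.one_le_exp (by positivity : (0:ℝ) ≤ δ * x)
    · have hn' : (0:ℝ) < n := by exact_mod_cast hn
      have he : Real.exp (δ * x) = Real.exp (δ * x / n) ^ n := by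
        rw [← Real.exp_nat_mul]; congr 1; field_simp
      rw [he]
      refine pow_le_pow_left₀ (by positivity) ?_ n
      nlinarith [Real.add_one_le_exp (δ * x / n)]
  have hpos : (0:ℝ) < (δ * x / n) ^ n := by
    rcases Nat.eq_zero_or_pos n with hn | hn
    · simp [hn]
    · have hn' : (0:ℝ) < n := by exact_mod_cast hn
      positivity
  have h2 : Real.exp (-(δ * x)) ≤ ((δ * x / n) ^ n)⁻¹ := by
    rw [Real.exp_neg]
    exact inv_anti₀ hpos h1
  refine h2.trans_eq ?_
  rw [← inv_pow, ← div_pow, inv_div, ← div_div]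

private lemma sumN {R δ : ℝ} (hR : 0 ≤ R) (hδ : 0 < δ) :
    Summable (fun k : ℕ => R ^ k * Real.exp (-(δ * 4 ^ k))) := by
  obtain ⟨n, hn⟩ : ∃ n : ℕ, 2 * R < 4 ^ n := pow_unbounded_of_one_lt (y := (4:ℝ)) (2 * R) (by norm_num)
  refine Summable.of_nonneg_of_le (fun k => by positivity)
    (f := fun k => ((n : ℝ) / δ) ^ n * (R / 4 ^ n) ^ k) (fun k => ?_) ?_
  · have h4 : (0:ℝ) < 4 ^ k := by positivity
    calc R ^ k * Real.exp (-(δ * 4 ^ k)) ≤ R ^ k * (((n:ℝ) / δ) ^ n / (4 ^ k) ^ n) := by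
          exact mul_le_mul_of_nonneg_left (exp_pow_aux n hδ h4) (by positivity)
      _ = ((n:ℝ) / δ) ^ n * (R / 4 ^ n) ^ k := by
          rw [div_pow, pow_right_comm]; ring
  · refine Summable.mul_left _ (summable_geometric_of_lt_one (by positivity) ?_)
    rw [div_lt_one (by positivity)]
    linarith



private lemma exp_neg_le_sq {x : ℝ} (hx : 0 < x) : Real.exp (-x) ≤ 4 / x ^ 2 := by
  have := exp_pow_aux 2 one_pos hx
  norm_num at this
  convert this using 2

private lemma sumZ {b c : ℝ} (hb : 1 < b) (hc : 1 ≤ c) (hcb : c < b) :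
    Summable (fun j : ℤ => (c / b) ^ j * Real.exp (-(b ^ (-(j + 1))))) := by
  have hb0 : (0:ℝ) < b := by linarith
  have hc0 : (0:ℝ) < c := by linarith
  have hbne : b ≠ 0 := ne_of_gt hb0
  have hcne : c ≠ 0 := ne_of_gt hc0
  apply Summable.of_nat_of_neg
  · refine Summable.of_nonneg_of_le (fun n => by positivity)
      (f := fun n : ℕ => (c / b) ^ n) (fun n => ?_) ?_
    · have h1 : Real.exp (-(b ^ (-((n:ℤ) + 1)))) ≤ 1 := by
        rw [Real.exp_le_one_iff]
        have : (0:ℝ) < b ^ (-((n:ℤ) + 1)) := zpow_pos hb0 _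
        linarith
      calc (c / b) ^ (n:ℤ) * Real.exp (-(b ^ (-((n:ℤ) + 1))))
          ≤ (c / b) ^ (n:ℤ) * 1 := by
            exact mul_le_mul_of_nonneg_left h1 (by positivity)
        _ = (c / b) ^ n := by rw [mul_one, zpow_natCast]
    · exact summable_geometric_of_lt_one (by positivity)
        (by rw [div_lt_one hb0]; exact hcb)
  · refine Summable.of_nonneg_of_le (fun n => by positivity)
      (f := fun n : ℕ => (4 * b ^ 2) * (1 / (c * b)) ^ n) (fun n => ?_) ?_
    · have hx : (0:ℝ) < b ^ ((n:ℤ) - 1) := zpow_pos hb0 _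
      have hexp : Real.exp (-(b ^ ((n:ℤ) - 1))) ≤ 4 / (b ^ ((n:ℤ) - 1)) ^ 2 :=
        exp_neg_le_sq hx
      have harg : -(-(n:ℤ) + 1) = (n:ℤ) - 1 := by ring
      have hbn : (b:ℝ) ^ (n:ℕ) ≠ 0 := by positivity
      have hcnn : (c:ℝ) ^ (n:ℕ) ≠ 0 := by positivity
      calc (c / b) ^ (-(n:ℤ)) * Real.exp (-(b ^ (-(-(n:ℤ) + 1))))
          = (c / b) ^ (-(n:ℤ)) * Real.exp (-(b ^ ((n:ℤ) - 1))) := by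
            rw [harg]
        _ ≤ (c / b) ^ (-(n:ℤ)) * (4 / (b ^ ((n:ℤ) - 1)) ^ 2) := by
            exact mul_le_mul_of_nonneg_left hexp (by positivity)
        _ = (4 * b ^ 2) * (1 / (c * b)) ^ n := by
            rw [zpow_neg, zpow_natCast, zpow_sub₀ hbne, zpow_one, zpow_natCast]
            field_simp
            rw [div_pow, one_div_pow, mul_pow]; field_simp
    · exact Summable.mul_left _ (summable_geometric_of_lt_one (by positivity)
        (by rw [div_lt_one (by positivity)]; nlinarith))



private lemma rpow_add_le {p q β : ℝ} (hp : 0 ≤ p) (hq : 0 ≤ q) (hβ : 0 ≤ β) :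
    (p + q) ^ β ≤ 2 ^ β * (p ^ β + q ^ β) := by
  have h1 : p + q ≤ 2 * max p q := by
    rcases le_total p q with h | h
    · rw [max_eq_right h]; linarith
    · rw [max_eq_left h]; linarith
  calc (p + q) ^ β ≤ (2 * max p q) ^ β :=
        Real.rpow_le_rpow (by positivity) h1 hβ
    _ = 2 ^ β * (max p q) ^ β := Real.mul_rpow (by norm_num) (le_max_iff.mpr (Or.inl hp))
    _ ≤ 2 ^ β * (p ^ β + q ^ β) := by
        refine mul_le_mul_of_nonneg_left ?_ (by positivity)
        rcases le_total p q with h | h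
        · rw [max_eq_right h]
          nlinarith [Real.rpow_nonneg hp β]
        · rw [max_eq_left h]
          nlinarith [Real.rpow_nonneg hq β]

private lemma zpow_rpow {x : ℝ} (hx : 0 < x) (j : ℤ) (c : ℝ) :
    ((x : ℝ) ^ j) ^ c = (x ^ c) ^ j := by
  rw [← Real.rpow_intCast x j, ← Real.rpow_mul hx.le, mul_comm,
    Real.rpow_mul hx.le, Real.rpow_intCast]

private lemma pow_rpow {x : ℝ} (hx : 0 < x) (k : ℕ) (c : ℝ) :
    ((x : ℝ) ^ k) ^ c = (x ^ c) ^ k := by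
  rw [← Real.rpow_natCast x k, ← Real.rpow_mul hx.le, mul_comm,
    Real.rpow_mul hx.le, Real.rpow_natCast]

private lemma doub {M : Type*} [MetricSpace M] [MeasureSpace M] {Cstar : ℝ}
    (hdoubling : ∀ (x : M) (r : ℝ), 0 < r →
      volume (ball x (2 * r)) ≤ ENNReal.ofReal Cstar * volume (ball x r))
    (x : M) {ρ : ℝ} (hρ : 0 < ρ) (k : ℕ) :
    volume (ball x (2 ^ k * ρ)) ≤ ENNReal.ofReal Cstar ^ k * volume (ball x ρ) := by
  induction k with
  | zero => simp
  | succ k ih =>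
    have h2 : (2:ℝ) ^ (k+1) * ρ = 2 * (2 ^ k * ρ) := by ring
    rw [h2]
    calc volume (ball x (2 * (2 ^ k * ρ)))
        ≤ ENNReal.ofReal Cstar * volume (ball x (2 ^ k * ρ)) :=
          hdoubling x _ (by positivity)
      _ ≤ ENNReal.ofReal Cstar * (ENNReal.ofReal Cstar ^ k * volume (ball x ρ)) := by
          exact mul_le_mul_right ih _
      _ = ENNReal.ofReal Cstar ^ (k+1) * volume (ball x ρ) := by ring

private lemma degen {M : Type*} [MetricSpace M] [MeasureSpace M] {Cstar : ℝ}
    (hdoubling : ∀ (x : M) (r : ℝ), 0 < r →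
      volume (ball x (2 * r)) ≤ ENNReal.ofReal Cstar * volume (ball x r))
    (x : M)
    (h : ∃ ρ > 0, volume (ball x ρ) = 0 ∨ volume (ball x ρ) = ⊤) :
    ∀ ρ > 0, (volume (ball x ρ)).toReal = 0 := by
  obtain ⟨ρ₀, hρ₀, h0 | htop⟩ := h <;> intro ρ hρ
  · rcases le_or_gt ρ ρ₀ with hle | hlt
    · have h1 : volume (ball x ρ) ≤ volume (ball x ρ₀) :=
        measure_mono (ball_subset_ball hle)
      rw [h0] at h1
      simp [le_antisymm h1 zero_le]
    · obtain ⟨k, hk⟩ : ∃ k : ℕ, ρ / ρ₀ < 2 ^ k :=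
        pow_unbounded_of_one_lt (y := (2:ℝ)) _ one_lt_two
      have hsub : ρ ≤ 2 ^ k * ρ₀ := by
        rw [div_lt_iff₀ hρ₀] at hk; linarith
      have h1 := (measure_mono (ball_subset_ball hsub)).trans (doub hdoubling x hρ₀ k)
      rw [h0, mul_zero] at h1
      simp [le_antisymm h1 zero_le]
  · rcases le_or_gt ρ₀ ρ with hle | hlt
    · have h1 : volume (ball x ρ₀) ≤ volume (ball x ρ) :=
        measure_mono (ball_subset_ball hle)
      rw [htop] at h1
      simp [top_le_iff.mp h1]
    · obtain ⟨k, hk⟩ : ∃ k : ℕ, ρ₀ / ρ < 2 ^ k :=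
        pow_unbounded_of_one_lt (y := (2:ℝ)) _ one_lt_two
      have hsub : ρ₀ ≤ 2 ^ k * ρ := by
        rw [div_lt_iff₀ hρ] at hk; linarith
      have h1 := (measure_mono (ball_subset_ball hsub)).trans (doub hdoubling x hρ k)
      rw [htop] at h1
      have h2 : volume (ball x ρ) = ⊤ := by
        by_contra hne
        exact (ENNReal.mul_ne_top (ENNReal.pow_ne_top ENNReal.ofReal_ne_top) hne)
          (top_le_iff.mp h1)
      simp [h2]
/-- Growth estimate for the mild solution of the fractional heat equation on a
doubling metric measure space: if the initial data has polynomial growth of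
order `α - ε` with respect to a reference point `o`, then
`|u(t,x)| ≤ C' (1 + d(x,o)^{α-ε}) + C' t^{(α-ε)/α}`. -/
theorem stmt19 {M : Type*} [MetricSpace M] [MeasureSpace M]
    (α ε Cstar d₂ D₂ C : ℝ) (o : M)
    (hα : 0 < α) (hα2 : α < 2) (hε : 0 < ε) (hεα : ε < α)
    (hCs : 1 ≤ Cstar) (hd₂ : 0 < d₂) (hD₂ : 0 < D₂) (hC : 0 < C)
    (hdoubling : ∀ (x : M) (r : ℝ), 0 < r →
      volume (ball x (2 * r)) ≤ ENNReal.ofReal Cstar * volume (ball x r))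
    (E : ℝ → M → M → ℝ)
    (hE_nonneg : ∀ t > (0:ℝ), ∀ x y : M, 0 ≤ E t x y)
    (hgauss_upper : ∀ t > (0:ℝ), ∀ x y : M,
      E t x y
        ≤ d₂ * Real.exp (-D₂ * dist x y ^ 2 / t) / (volume (ball x (Real.sqrt t))).toReal)
    (η₁ : ℝ → ℝ)
    (hη_nonneg : ∀ s > (0:ℝ), 0 ≤ η₁ s)
    (hη_upper : ∀ s > (0:ℝ),
      η₁ s ≤ C * s ^ (-1 - α / 2) * Real.exp (-s ^ (-(α / 2))))
    (pα : ℝ → M → M → ℝ)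
    (hpα : ∀ t > (0:ℝ), ∀ x y : M,
      pα t x y = ∫ s in Ioi (0:ℝ), E (t ^ (2 / α) * s) x y * η₁ s)
    (u0 : M → ℝ)
    (hu0 : ∀ y : M, |u0 y| ≤ C * (1 + dist y o ^ (α - ε)))
    (u : ℝ → M → ℝ)
    (hu : ∀ t > (0:ℝ), ∀ x : M, u t x = ∫ y, pα t x y * u0 y) :
    ∃ C' > 0, ∀ t > (0:ℝ), ∀ x : M,
      |u t x| ≤ C' * (1 + dist x o ^ (α - ε)) + C' * t ^ ((α - ε) / α) := by
  classical
  set β := α - ε with hβdef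
  have hβ0 : 0 < β := by rw [hβdef]; linarith
  have hβα : β < α := by rw [hβdef]; linarith
  have h2β1 : (1:ℝ) ≤ 2 ^ β := Real.one_le_rpow one_le_two hβ0.le
  set b := (2:ℝ) ^ (α / 2) with hbdef
  set v := Real.sqrt 2 ^ β with hvdef
  have hb1 : (1:ℝ) < b := Real.one_lt_rpow one_lt_two (by linarith)
  have hveq : v = (2:ℝ) ^ (β / 2) := by
    rw [hvdef, Real.sqrt_eq_rpow, ← Real.rpow_mul (by norm_num)]
    congr 1; ring
  have hv1 : (1:ℝ) ≤ v := by
    rw [hveq]; exact Real.one_le_rpow one_le_two (by positivity)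
  have hvb : v < b := by
    rw [hveq, hbdef]
    exact Real.rpow_lt_rpow_of_exponent_lt one_lt_two (by linarith)
  set δ := D₂ / 8 with hδdef
  have hδ : 0 < δ := by positivity
  have hsumK : Summable (fun k : ℕ => (Cstar * 2 ^ β) ^ k * Real.exp (-(δ * 4 ^ k))) :=
    sumN (by positivity) hδ
  have hsumJ1 : Summable (fun j : ℤ => (1 / b) ^ j * Real.exp (-(b ^ (-(j + 1))))) :=
    sumZ hb1 le_rfl hb1
  have hsumJ2 : Summable (fun j : ℤ => (v / b) ^ j * Real.exp (-(b ^ (-(j + 1))))) :=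
    sumZ hb1 hv1 hvb
  set K := ∑' k : ℕ, (Cstar * 2 ^ β) ^ k * Real.exp (-(δ * 4 ^ k)) with hKdef
  set J1 := ∑' j : ℤ, (1 / b) ^ j * Real.exp (-(b ^ (-(j + 1)))) with hJ1def
  set J2 := ∑' j : ℤ, (v / b) ^ j * Real.exp (-(b ^ (-(j + 1)))) with hJ2def
  have hK0 : 0 ≤ K := tsum_nonneg (fun k => by positivity)
  have hJ10 : 0 ≤ J1 := tsum_nonneg (fun j => by positivity)
  have hJ20 : 0 ≤ J2 := tsum_nonneg (fun j => by positivity)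
  set c0 := C ^ 2 * d₂ * Real.exp (D₂ / 2) with hc0def
  have hc00 : 0 < c0 := by positivity
  have h2βpos : (0:ℝ) < 2 ^ β := by positivity
  set C' := c0 * 2 ^ β * (K * J1 + K * J2) + 1 with hC'def
  have hC'pos : 0 < C' := by
    have h1 : 0 ≤ c0 * 2 ^ β * (K * J1 + K * J2) := by
      apply mul_nonneg (by positivity)
      exact add_nonneg (mul_nonneg hK0 hJ10) (mul_nonneg hK0 hJ20)
    rw [hC'def]; linarith
  refine ⟨C', hC'pos, ?_⟩
  intro t ht x
  have hApos : (0:ℝ) ≤ dist x o ^ β := Real.rpow_nonneg dist_nonneg β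
  have htβ : (0:ℝ) ≤ t ^ (β / α) := Real.rpow_nonneg ht.le _
  by_cases hdeg : ∃ ρ > 0, volume (ball x ρ) = 0 ∨ volume (ball x ρ) = ⊤
  · -- degenerate case
    have hz := degen hdoubling x hdeg
    have hE0 : ∀ τ > (0:ℝ), ∀ y, E τ x y = 0 := by
      intro τ hτ y
      refine le_antisymm ?_ (hE_nonneg τ hτ x y)
      have h1 := hgauss_upper τ hτ x y
      rw [hz _ (Real.sqrt_pos.mpr hτ)] at h1
      simpa using h1
    have hp0 : ∀ y, pα t x y = 0 := by
      intro y
      rw [hpα t ht x y]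
      have hT : 0 < t ^ (2 / α) := Real.rpow_pos_of_pos ht _
      have heq : EqOn (fun s => E (t ^ (2 / α) * s) x y * η₁ s) (fun _ => (0:ℝ)) (Ioi 0) := by
        intro s hs
        have hs' : 0 < t ^ (2 / α) * s := mul_pos hT hs
        simp [hE0 _ hs' y]
      rw [setIntegral_congr_fun measurableSet_Ioi heq, integral_zero]
    rw [hu t ht x]
    have hz2 : (fun y => pα t x y * u0 y) = fun _ => (0:ℝ) := by
      funext y; rw [hp0 y, zero_mul]
    rw [hz2, integral_zero, abs_zero]
    nlinarith [mul_nonneg hC'pos.le htβ, mul_pos hC'pos (show (0:ℝ) < 1 + dist x o ^ β by linarith)]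
  · -- main case
    push_neg at hdeg
    set T := t ^ (2 / α) with hTdef
    have hT : 0 < T := Real.rpow_pos_of_pos ht _
    set r := t ^ (1 / α) with hrdef
    have hr : 0 < r := Real.rpow_pos_of_pos ht _
    have hTr : T = r ^ 2 := by
      rw [hTdef, hrdef, ← Real.rpow_natCast (t ^ (1 / α)) 2, ← Real.rpow_mul ht.le]
      congr 1
      push_cast
      ring
    have hrβ : r ^ β = t ^ (β / α) := by
      rw [hrdef, ← Real.rpow_mul ht.le]
      congr 1
      ring
    set A := dist x o ^ β with hAdef
    set ρf : ℤ → ℝ := fun j => r * Real.sqrt 2 ^ j with hρfdef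
    have hsq2 : (0:ℝ) < Real.sqrt 2 := Real.sqrt_pos.mpr two_pos
    have hρpos : ∀ j, 0 < ρf j := fun j => mul_pos hr (zpow_pos hsq2 j)
    have hWne : ∀ ρ' : ℝ, 0 < ρ' → volume (ball x ρ') ≠ 0 ∧ volume (ball x ρ') ≠ ⊤ := by
      intro ρ' hρ'
      have h := hdeg ρ' hρ'
      tauto
    set Wf : ℤ → ENNReal := fun j => volume (ball x (ρf j)) with hWfdef
    have hW0 : ∀ j, Wf j ≠ 0 := fun j => (hWne _ (hρpos j)).1
    have hWtop : ∀ j, Wf j ≠ ⊤ := fun j => (hWne _ (hρpos j)).2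
    have hWpos : ∀ j, 0 < (Wf j).toReal := fun j => ENNReal.toReal_pos (hW0 j) (hWtop j)
    set P : ℤ → ℝ := fun j => (1 / b) ^ j * Real.exp (-(b ^ (-(j + 1)))) with hPdef
    have hP0 : ∀ j, 0 ≤ P j := fun j => by
      rw [hPdef]
      have hb0 : (0:ℝ) < b := by linarith
      positivity
    set G : ℕ → ℝ := fun k => Real.exp (D₂ / 2) * Real.exp (-(δ * 4 ^ k)) with hGdef
    have hG0 : ∀ k, 0 ≤ G k := fun k => by rw [hGdef]; positivity
    set m : ℤ → ℕ → ℝ := fun j k =>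
      C ^ 2 * d₂ * P j * G k * (1 + 2 ^ β * ((2 ^ k * ρf j) ^ β + A)) / (Wf j).toReal
      with hmdef
    have hm0 : ∀ j k, 0 ≤ m j k := by
      intro j k
      rw [hmdef]
      have h1 := hP0 j
      have h2 := hG0 k
      have h3 := (hWpos j).le
      have h4 : (0:ℝ) ≤ (2 ^ k * ρf j) ^ β := Real.rpow_nonneg (by positivity : (0:ℝ) ≤ 2 ^ k * ρf j) β
      have h5 : (0:ℝ) ≤ A := Real.rpow_nonneg dist_nonneg β
      have h6 : (0:ℝ) ≤ 1 + 2 ^ β * ((2 ^ k * ρf j) ^ β + A) := by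
        have := mul_nonneg h2βpos.le (add_nonneg h4 h5)
        linarith
      positivity
    set Tset : ℤ → ℕ → Set M := fun j k => toMeasurable volume (ball x (2 ^ k * ρf j))
      with hTsetdef
    set Hf : M → ℝ → ℝ := fun y s =>
      d₂ * Real.exp (-D₂ * dist x y ^ 2 / (T * s)) /
          (volume (ball x (Real.sqrt (T * s)))).toReal *
        (C * s ^ (-1 - α / 2) * Real.exp (-s ^ (-(α / 2)))) with hHfdef
    set hfun : ℤ → M → ℝ := fun j y =>
      d₂ * Real.exp (-D₂ * dist x y ^ 2 / (T * 2 ^ (j + 1))) / (Wf j).toReal *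
        (C * ((2:ℝ) ^ j) ^ (-1 - α / 2) * Real.exp (-((2:ℝ) ^ (j + 1)) ^ (-(α / 2))))
      with hhfundef
    have hhfun0 : ∀ j y, 0 ≤ hfun j y := by
      intro j y
      rw [hhfundef]
      have h3 := (hWpos j).le
      have hsj : (0:ℝ) < (2:ℝ) ^ j := zpow_pos two_pos j
      have hsj1 : (0:ℝ) < (2:ℝ) ^ (j + 1) := zpow_pos two_pos _
      positivity
    -- Step 1 : pointwise bound on the integrand by kernel bound
    have hpab : ∀ y, ENNReal.ofReal |pα t x y * u0 y| ≤
        (∫⁻ s in Ioi (0:ℝ), ENNReal.ofReal (Hf y s)) *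
          ENNReal.ofReal (C * (1 + dist y o ^ β)) := by
      intro y
      set N₀ := ∫⁻ s in Ioi (0:ℝ), ENNReal.ofReal ‖E (T * s) x y * η₁ s‖ with hN₀def
      have h1 : |pα t x y| ≤ N₀.toReal := by
        rw [hpα t ht x y, ← Real.norm_eq_abs]
        exact norm_integral_le_lintegral_norm _
      have h2 : N₀ ≤ ∫⁻ s in Ioi (0:ℝ), ENNReal.ofReal (Hf y s) := by
        refine lintegral_mono_ae ((ae_restrict_iff' measurableSet_Ioi).mpr (ae_of_all _ ?_))
        intro s hs
        have hs0 : (0:ℝ) < s := hs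
        have hTs : 0 < T * s := mul_pos hT hs0
        apply ENNReal.ofReal_le_ofReal
        rw [Real.norm_eq_abs,
          abs_of_nonneg (mul_nonneg (hE_nonneg _ hTs x y) (hη_nonneg s hs0))]
        rw [hHfdef]
        have hg := hgauss_upper _ hTs x y
        have hη := hη_upper s hs0
        refine mul_le_mul hg hη (hη_nonneg s hs0) ?_
        positivity
      calc ENNReal.ofReal |pα t x y * u0 y|
          ≤ ENNReal.ofReal (N₀.toReal * (C * (1 + dist y o ^ β))) := by
            apply ENNReal.ofReal_le_ofReal
            rw [abs_mul]
            exact mul_le_mul h1 (hu0 y) (abs_nonneg _) ENNReal.toReal_nonneg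
        _ = ENNReal.ofReal N₀.toReal * ENNReal.ofReal (C * (1 + dist y o ^ β)) :=
            ENNReal.ofReal_mul ENNReal.toReal_nonneg
        _ ≤ N₀ * ENNReal.ofReal (C * (1 + dist y o ^ β)) :=
            mul_le_mul_left ENNReal.ofReal_toReal_le _
        _ ≤ _ := mul_le_mul_left h2 _
    -- Step 2 : dyadic decomposition of the s-integral
    have hstep2 : ∀ y, (∫⁻ s in Ioi (0:ℝ), ENNReal.ofReal (Hf y s)) ≤
        ∑' j : ℤ, ENNReal.ofReal (hfun j y) * ENNReal.ofReal ((2:ℝ) ^ j) := by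
      intro y
      have hcover : Ioi (0:ℝ) ⊆ ⋃ j : ℤ, Ioc ((2:ℝ) ^ j) ((2:ℝ) ^ (j + 1)) := fun s hs =>
        mem_iUnion.mpr (exists_mem_Ioc_zpow hs one_lt_two)
      calc (∫⁻ s in Ioi (0:ℝ), ENNReal.ofReal (Hf y s))
          ≤ ∫⁻ s in ⋃ j : ℤ, Ioc ((2:ℝ) ^ j) ((2:ℝ) ^ (j + 1)), ENNReal.ofReal (Hf y s) :=
            lintegral_mono_set hcover
        _ ≤ ∑' j : ℤ, ∫⁻ s in Ioc ((2:ℝ) ^ j) ((2:ℝ) ^ (j + 1)), ENNReal.ofReal (Hf y s) :=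
            lintegral_iUnion_le _ _
        _ ≤ ∑' j : ℤ, ENNReal.ofReal (hfun j y) * ENNReal.ofReal ((2:ℝ) ^ j) := by
            refine ENNReal.tsum_le_tsum (fun j => ?_)
            have hsj : (0:ℝ) < (2:ℝ) ^ j := zpow_pos two_pos j
            have hsj1 : (0:ℝ) < (2:ℝ) ^ (j + 1) := zpow_pos two_pos _
            have hkey : ∀ s ∈ Ioc ((2:ℝ) ^ j) ((2:ℝ) ^ (j + 1)),
                ENNReal.ofReal (Hf y s) ≤ ENNReal.ofReal (hfun j y) := by
              intro s hs
              obtain ⟨hs1, hs2⟩ := hs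
              have hs0 : (0:ℝ) < s := hsj.trans hs1
              apply ENNReal.ofReal_le_ofReal
              rw [hHfdef, hhfundef]
              have hd2 : (0:ℝ) ≤ dist x y ^ 2 := sq_nonneg _
              -- the four comparisons
              have c1 : s ^ (-1 - α / 2) ≤ ((2:ℝ) ^ j) ^ (-1 - α / 2) :=
                Real.rpow_le_rpow_of_nonpos hsj hs1.le (by linarith)
              have c2 : Real.exp (-s ^ (-(α / 2))) ≤ Real.exp (-((2:ℝ) ^ (j + 1)) ^ (-(α / 2))) := by
                apply Real.exp_le_exp.mpr
                apply neg_le_neg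
                exact Real.rpow_le_rpow_of_nonpos hs0 hs2 (by linarith)
              have c3 : Real.exp (-D₂ * dist x y ^ 2 / (T * s)) ≤
                  Real.exp (-D₂ * dist x y ^ 2 / (T * 2 ^ (j + 1))) := by
                apply Real.exp_le_exp.mpr
                rw [neg_mul, neg_div, neg_div, neg_le_neg_iff]
                apply div_le_div_of_nonneg_left (by positivity) (by positivity)
                exact mul_le_mul_of_nonneg_left hs2 hT.le
              have c4 : (Wf j).toReal ≤ (volume (ball x (Real.sqrt (T * s)))).toReal := by
                have hrad : ρf j ≤ Real.sqrt (T * s) := by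
                  rw [hTr, Real.sqrt_mul (sq_nonneg r) s, Real.sqrt_sq hr.le]
                  rw [hρfdef]
                  apply mul_le_mul_of_nonneg_left ?_ hr.le
                  have h2j : Real.sqrt ((2:ℝ) ^ j) = Real.sqrt 2 ^ j := by
                    rw [show ((2:ℝ) ^ j) = (Real.sqrt 2 ^ j) ^ 2 by
                      rw [← zpow_natCast (Real.sqrt 2 ^ j) 2, ← zpow_mul, mul_comm,
                        zpow_mul, zpow_natCast, Real.sq_sqrt (by norm_num : (0:ℝ) ≤ 2)],
                      Real.sqrt_sq (zpow_nonneg (Real.sqrt_nonneg 2) j)]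
                  rw [← h2j]
                  exact Real.sqrt_le_sqrt hs1.le
                refine ENNReal.toReal_mono ?_ (measure_mono (ball_subset_ball hrad))
                exact (hWne _ (Real.sqrt_pos.mpr (by positivity))).2
              have hVpos : 0 < (Wf j).toReal := hWpos j
              -- assemble
              refine mul_le_mul ?_ ?_ (by positivity) ?_
              · apply div_le_div₀ (by positivity)
                  (mul_le_mul_of_nonneg_left c3 hd₂.le) hVpos c4
              · refine mul_le_mul (mul_le_mul_of_nonneg_left c1 hC.le) c2
                  (Real.exp_nonneg _) (by positivity)
              · have := hWpos j
                positivity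
            calc ∫⁻ s in Ioc ((2:ℝ) ^ j) ((2:ℝ) ^ (j + 1)), ENNReal.ofReal (Hf y s)
                ≤ ∫⁻ _ in Ioc ((2:ℝ) ^ j) ((2:ℝ) ^ (j + 1)), ENNReal.ofReal (hfun j y) :=
                  lintegral_mono_ae ((ae_restrict_iff' measurableSet_Ioc).mpr
                    (ae_of_all _ hkey))
              _ = ENNReal.ofReal (hfun j y) * volume (Ioc ((2:ℝ) ^ j) ((2:ℝ) ^ (j + 1))) :=
                  setLIntegral_const _ _
              _ = ENNReal.ofReal (hfun j y) * ENNReal.ofReal ((2:ℝ) ^ j) := by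
                  rw [Real.volume_Ioc]
                  congr 2
                  rw [zpow_add_one₀ (two_ne_zero)]
                  ring

    -- Step 3 : annuli decomposition in space
    have hstep3 : ∀ y j, ENNReal.ofReal (hfun j y) * ENNReal.ofReal ((2:ℝ) ^ j) *
          ENNReal.ofReal (C * (1 + dist y o ^ β)) ≤
        ∑' k : ℕ, (Tset j k).indicator (fun _ => ENNReal.ofReal (m j k)) y := by
      intro y j
      have hb0 : (0:ℝ) < b := by linarith
      have h2j : (0:ℝ) < (2:ℝ) ^ j := zpow_pos two_pos j
      have h2j1 : (0:ℝ) < (2:ℝ) ^ (j + 1) := zpow_pos two_pos _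
      -- identity for the j-dependent factors
      have hId : (2:ℝ) ^ j * ((2:ℝ) ^ j : ℝ) ^ (-1 - α / 2) *
          Real.exp (-((2:ℝ) ^ (j + 1)) ^ (-(α / 2))) = P j := by
        rw [hPdef]
        have hbinv : (2:ℝ) ^ (-(α / 2)) = 1 / b := by
          rw [hbdef, Real.rpow_neg (by norm_num), one_div]
        congr 1
        · rw [show (-1 - α / 2 : ℝ) = -1 + -(α / 2) from by ring, Real.rpow_add h2j,
            Real.rpow_neg_one, zpow_rpow two_pos j (-(α / 2)), hbinv]
          field_simp
        · congr 1
          rw [zpow_rpow two_pos (j + 1) (-(α / 2)), hbinv, one_div, inv_zpow, ← zpow_neg]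
      -- minimal annulus index
      obtain ⟨k1, hk1⟩ : ∃ k : ℕ, dist y x < 2 ^ k * ρf j := by
        obtain ⟨k, hk⟩ := pow_unbounded_of_one_lt (y := (2:ℝ)) (dist y x / ρf j) one_lt_two
        refine ⟨k, ?_⟩
        rw [div_lt_iff₀ (hρpos j)] at hk
        linarith
      have hex : ∃ k : ℕ, dist y x < 2 ^ k * ρf j := ⟨k1, hk1⟩
      obtain ⟨k0, hk0, hkmin⟩ : ∃ k0 : ℕ, dist y x < 2 ^ k0 * ρf j ∧
          ∀ k < k0, ¬(dist y x < 2 ^ k * ρf j) :=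
        ⟨Nat.find hex, Nat.find_spec hex, fun k hk => Nat.find_min hex hk⟩
      have hymem : y ∈ Tset j k0 := by
        rw [hTsetdef]
        exact subset_toMeasurable _ _ (mem_ball.mpr hk0)
      refine le_trans ?_ (ENNReal.le_tsum k0)
      rw [indicator_of_mem hymem]
      rw [← ENNReal.ofReal_mul (hhfun0 j y),
        ← ENNReal.ofReal_mul (mul_nonneg (hhfun0 j y) h2j.le)]
      apply ENNReal.ofReal_le_ofReal
      -- gaussian factor bound
      have hρsq : ρf j ^ 2 = r ^ 2 * (2:ℝ) ^ j := by
        rw [hρfdef]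
        have : (Real.sqrt 2 ^ j) ^ 2 = (2:ℝ) ^ j := by
          rw [← zpow_natCast (Real.sqrt 2 ^ j) 2, ← zpow_mul, mul_comm, zpow_mul,
            zpow_natCast, Real.sq_sqrt (by norm_num : (0:ℝ) ≤ 2)]
        rw [mul_pow, this]
      have hG : Real.exp (-D₂ * dist x y ^ 2 / (T * 2 ^ (j + 1))) ≤ G k0 := by
        rcases Nat.eq_zero_or_pos k0 with hk0z | hk0pos
        · have h1 : Real.exp (-D₂ * dist x y ^ 2 / (T * 2 ^ (j + 1))) ≤ 1 := by
            apply Real.exp_le_one_iff.mpr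
            apply div_nonpos_of_nonpos_of_nonneg
            · have : (0:ℝ) ≤ D₂ * dist x y ^ 2 := by positivity
              linarith
            · positivity
          have h2 : (1:ℝ) ≤ G k0 := by
            simp only [hGdef, hk0z, pow_zero, mul_one, ← Real.exp_add]
            apply Real.one_le_exp
            rw [hδdef]
            linarith
          linarith
        · obtain ⟨k', rfl⟩ : ∃ k', k0 = k' + 1 := ⟨k0 - 1, (Nat.succ_pred_eq_of_pos hk0pos).symm⟩
          have hmin : ¬(dist y x < 2 ^ k' * ρf j) := hkmin k' (Nat.lt_succ_self k')
          push_neg at hmin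
          have hdxy : 2 ^ k' * ρf j ≤ dist x y := by rw [dist_comm]; exact hmin
          have hsq : (2 ^ k' * ρf j) ^ 2 ≤ dist x y ^ 2 :=
            pow_le_pow_left₀ (by positivity) hdxy 2
          have h4k : ((2:ℝ) ^ k') ^ 2 = (4:ℝ) ^ k' := by
            rw [← pow_mul, mul_comm, pow_mul]
            norm_num
          have hargle : δ * 4 ^ (k' + 1) ≤ D₂ * dist x y ^ 2 / (T * 2 ^ (j + 1)) := by
            rw [le_div_iff₀ (by positivity)]
            calc δ * 4 ^ (k' + 1) * (T * 2 ^ (j + 1))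
                = D₂ * ((2 ^ k' * ρf j) ^ 2) := by
                  rw [hδdef, hTr, zpow_add_one₀ two_ne_zero, mul_pow, h4k, hρsq, pow_succ]
                  ring
              _ ≤ D₂ * dist x y ^ 2 := mul_le_mul_of_nonneg_left hsq hD₂.le
          have h1 : Real.exp (-D₂ * dist x y ^ 2 / (T * 2 ^ (j + 1))) ≤
              Real.exp (-(δ * 4 ^ (k' + 1))) := by
            apply Real.exp_le_exp.mpr
            rw [neg_mul, neg_div]
            linarith
          refine h1.trans ?_
          simp only [hGdef]
          exact le_mul_of_one_le_left (Real.exp_pos _).le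
            (Real.one_le_exp (by positivity : (0:ℝ) ≤ D₂ / 2))
      -- growth factor bound
      have hdist : 1 + dist y o ^ β ≤ 1 + 2 ^ β * ((2 ^ k0 * ρf j) ^ β + A) := by
        have h1 : dist y o ^ β ≤ (dist y x + dist x o) ^ β :=
          Real.rpow_le_rpow dist_nonneg (dist_triangle y x o) hβ0.le
        have h2 : (dist y x + dist x o) ^ β ≤ 2 ^ β * (dist y x ^ β + dist x o ^ β) :=
          rpow_add_le dist_nonneg dist_nonneg hβ0.le
        have h3 : dist y x ^ β ≤ (2 ^ k0 * ρf j) ^ β :=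
          Real.rpow_le_rpow dist_nonneg hk0.le hβ0.le
        have h4 : 2 ^ β * (dist y x ^ β + dist x o ^ β) ≤
            2 ^ β * ((2 ^ k0 * ρf j) ^ β + A) := by
          apply mul_le_mul_of_nonneg_left _ h2βpos.le
          rw [hAdef]
          linarith
        linarith
      -- assemble
      have hw0 : (0:ℝ) ≤ 1 + dist y o ^ β := by positivity
      calc hfun j y * (2:ℝ) ^ j * (C * (1 + dist y o ^ β))
          = C ^ 2 * d₂ *
              ((2:ℝ) ^ j * ((2:ℝ) ^ j : ℝ) ^ (-1 - α / 2) *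
                Real.exp (-((2:ℝ) ^ (j + 1)) ^ (-(α / 2)))) *
              (Real.exp (-D₂ * dist x y ^ 2 / (T * 2 ^ (j + 1))) *
                (1 + dist y o ^ β)) / (Wf j).toReal := by
            simp only [hhfundef]
            ring
        _ = C ^ 2 * d₂ * P j *
              (Real.exp (-D₂ * dist x y ^ 2 / (T * 2 ^ (j + 1))) *
                (1 + dist y o ^ β)) / (Wf j).toReal := by rw [hId]
        _ ≤ C ^ 2 * d₂ * P j *
              (G k0 * (1 + 2 ^ β * ((2 ^ k0 * ρf j) ^ β + A))) / (Wf j).toReal := by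
            rw [div_le_div_iff_of_pos_right (hWpos j)]
            apply mul_le_mul_of_nonneg_left _ (mul_nonneg (by positivity) (hP0 j))
            exact mul_le_mul hG hdist hw0 (hG0 k0)
        _ = m j k0 := by
            simp only [hmdef]
            ring

    -- combine pointwise
    have hptw : ∀ y, ENNReal.ofReal |pα t x y * u0 y| ≤
        ∑' j : ℤ, ∑' k : ℕ, (Tset j k).indicator (fun _ => ENNReal.ofReal (m j k)) y := by
      intro y
      refine (hpab y).trans ?_
      calc (∫⁻ s in Ioi (0:ℝ), ENNReal.ofReal (Hf y s)) *
            ENNReal.ofReal (C * (1 + dist y o ^ β))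
          ≤ (∑' j : ℤ, ENNReal.ofReal (hfun j y) * ENNReal.ofReal ((2:ℝ) ^ j)) *
            ENNReal.ofReal (C * (1 + dist y o ^ β)) :=
            mul_le_mul_left (hstep2 y) _
        _ = ∑' j : ℤ, ENNReal.ofReal (hfun j y) * ENNReal.ofReal ((2:ℝ) ^ j) *
            ENNReal.ofReal (C * (1 + dist y o ^ β)) := ENNReal.tsum_mul_right.symm
        _ ≤ _ := ENNReal.tsum_le_tsum (fun j => hstep3 y j)
    -- integrate
    have hLle : (∫⁻ y, ENNReal.ofReal |pα t x y * u0 y|) ≤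
        ∑' j : ℤ, ∑' k : ℕ, ENNReal.ofReal (m j k) * volume (ball x (2 ^ k * ρf j)) := by
      calc (∫⁻ y, ENNReal.ofReal |pα t x y * u0 y|)
          ≤ ∫⁻ y, ∑' j : ℤ, ∑' k : ℕ,
              (Tset j k).indicator (fun _ => ENNReal.ofReal (m j k)) y :=
            lintegral_mono hptw
        _ = ∑' j : ℤ, ∫⁻ y, ∑' k : ℕ,
              (Tset j k).indicator (fun _ => ENNReal.ofReal (m j k)) y :=
            lintegral_tsum (fun j => (Measurable.ennreal_tsum (fun k =>
              measurable_const.indicator (measurableSet_toMeasurable _ _))).aemeasurable)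
        _ = ∑' j : ℤ, ∑' k : ℕ, ∫⁻ y,
              (Tset j k).indicator (fun _ => ENNReal.ofReal (m j k)) y :=
            tsum_congr (fun j => lintegral_tsum (fun k =>
              (measurable_const.indicator (measurableSet_toMeasurable _ _)).aemeasurable))
        _ = ∑' j : ℤ, ∑' k : ℕ, ENNReal.ofReal (m j k) * volume (Tset j k) :=
            tsum_congr (fun j => tsum_congr (fun k =>
              lintegral_indicator_const (measurableSet_toMeasurable _ _) _))
        _ = ∑' j : ℤ, ∑' k : ℕ, ENNReal.ofReal (m j k) * volume (ball x (2 ^ k * ρf j)) := by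
            refine tsum_congr (fun j => tsum_congr (fun k => ?_))
            rw [hTsetdef]
            rw [measure_toMeasurable]
    -- per-term bound and summation
    have hfinal : (∫⁻ y, ENNReal.ofReal |pα t x y * u0 y|) ≤
        ENNReal.ofReal (c0 * (1 + 2 ^ β * A) * J1 * K) +
          ENNReal.ofReal (c0 * 2 ^ β * r ^ β * J2 * K) := by
      have hCs0 : (0:ℝ) ≤ Cstar := by linarith
      have h1p : (0:ℝ) ≤ 1 + 2 ^ β * A := by
        have := mul_nonneg h2βpos.le hApos
        linarith
      have hc10 : (0:ℝ) ≤ c0 * (1 + 2 ^ β * A) := mul_nonneg hc00.le h1p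
      have hrb0 : (0:ℝ) ≤ r ^ β := Real.rpow_nonneg hr.le β
      have hc20 : (0:ℝ) ≤ c0 * 2 ^ β * r ^ β :=
        mul_nonneg (mul_nonneg hc00.le h2βpos.le) hrb0
      have hw0 : ∀ k : ℕ, (0:ℝ) ≤ (Cstar * 2 ^ β) ^ k * Real.exp (-(δ * 4 ^ k)) :=
        fun k => mul_nonneg (pow_nonneg (mul_nonneg hCs0 h2βpos.le) k) (Real.exp_nonneg _)
      have hPj0 : ∀ j : ℤ, (0:ℝ) ≤ (1 / b : ℝ) ^ j * Real.exp (-(b ^ (-(j + 1)))) := by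
        intro j
        have hb0 : (0:ℝ) < b := by linarith
        positivity
      have hPv0 : ∀ j : ℤ, (0:ℝ) ≤ (v / b : ℝ) ^ j * Real.exp (-(b ^ (-(j + 1)))) := by
        intro j
        have hb0 : (0:ℝ) < b := by linarith
        have hv0 : (0:ℝ) < v := by linarith
        positivity
      -- per-term bound
      have hjk : ∀ (j : ℤ) (k : ℕ),
          ENNReal.ofReal (m j k) * volume (ball x (2 ^ k * ρf j)) ≤
          ENNReal.ofReal ((c0 * (1 + 2 ^ β * A) * P j) *
            ((Cstar * 2 ^ β) ^ k * Real.exp (-(δ * 4 ^ k)))) +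
          ENNReal.ofReal ((c0 * 2 ^ β * r ^ β * (P j * v ^ j)) *
            ((Cstar * 2 ^ β) ^ k * Real.exp (-(δ * 4 ^ k)))) := by
        intro j k
        have ht1 : (0:ℝ) ≤ (c0 * (1 + 2 ^ β * A) * P j) *
            ((Cstar * 2 ^ β) ^ k * Real.exp (-(δ * 4 ^ k))) :=
          mul_nonneg (mul_nonneg hc10 (hP0 j)) (hw0 k)
        have ht2 : (0:ℝ) ≤ (c0 * 2 ^ β * r ^ β * (P j * v ^ j)) *
            ((Cstar * 2 ^ β) ^ k * Real.exp (-(δ * 4 ^ k))) := by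
          refine mul_nonneg (mul_nonneg hc20 (mul_nonneg (hP0 j) ?_)) (hw0 k)
          exact zpow_nonneg (by linarith) j
        have hvol : volume (ball x (2 ^ k * ρf j)) ≤ ENNReal.ofReal Cstar ^ k * Wf j := by
          rw [hWfdef]
          exact doub hdoubling x (hρpos j) k
        have hreal : m j k * (Wf j).toReal * Cstar ^ k ≤
            (c0 * (1 + 2 ^ β * A) * P j) * ((Cstar * 2 ^ β) ^ k * Real.exp (-(δ * 4 ^ k))) +
            (c0 * 2 ^ β * r ^ β * (P j * v ^ j)) *
              ((Cstar * 2 ^ β) ^ k * Real.exp (-(δ * 4 ^ k))) := by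
          have hcancel : m j k * (Wf j).toReal =
              C ^ 2 * d₂ * P j * G k * (1 + 2 ^ β * ((2 ^ k * ρf j) ^ β + A)) := by
            simp only [hmdef]
            rw [div_mul_cancel₀ _ (ne_of_gt (hWpos j))]
          rw [hcancel]
          have hsplit : C ^ 2 * d₂ * P j * G k *
                (1 + 2 ^ β * ((2 ^ k * ρf j) ^ β + A)) * Cstar ^ k =
              (C ^ 2 * d₂ * P j * G k * Cstar ^ k) * (1 + 2 ^ β * A) +
              (C ^ 2 * d₂ * P j * G k * Cstar ^ k) * (2 ^ β * (2 ^ k * ρf j) ^ β) := by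
            ring
          rw [hsplit]
          have hpow : Cstar ^ k ≤ (Cstar * 2 ^ β) ^ k :=
            pow_le_pow_left₀ hCs0 (le_mul_of_one_le_right hCs0 h2β1) k
          have hcom : (0:ℝ) ≤ C ^ 2 * d₂ * Real.exp (D₂ / 2) *
              Real.exp (-(δ * 4 ^ k)) * (1 + 2 ^ β * A) * P j :=
            mul_nonneg (mul_nonneg (by positivity) h1p) (hP0 j)
          have hX1 : (C ^ 2 * d₂ * P j * G k * Cstar ^ k) * (1 + 2 ^ β * A) ≤
              (c0 * (1 + 2 ^ β * A) * P j) *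
                ((Cstar * 2 ^ β) ^ k * Real.exp (-(δ * 4 ^ k))) := by
            calc (C ^ 2 * d₂ * P j * G k * Cstar ^ k) * (1 + 2 ^ β * A)
                = (C ^ 2 * d₂ * Real.exp (D₂ / 2) * Real.exp (-(δ * 4 ^ k)) *
                    (1 + 2 ^ β * A) * P j) * Cstar ^ k := by
                  simp only [hGdef]; ring
              _ ≤ (C ^ 2 * d₂ * Real.exp (D₂ / 2) * Real.exp (-(δ * 4 ^ k)) *
                    (1 + 2 ^ β * A) * P j) * (Cstar * 2 ^ β) ^ k :=
                  mul_le_mul_of_nonneg_left hpow hcom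
              _ = (c0 * (1 + 2 ^ β * A) * P j) *
                    ((Cstar * 2 ^ β) ^ k * Real.exp (-(δ * 4 ^ k))) := by
                  simp only [hc0def]; ring
          have hrw : ((2:ℝ) ^ k * ρf j) ^ β = ((2:ℝ) ^ β) ^ k * (r ^ β * v ^ j) := by
            rw [Real.mul_rpow (by positivity) (hρpos j).le]
            simp only [hρfdef]
            rw [Real.mul_rpow hr.le (zpow_nonneg (Real.sqrt_nonneg 2) j),
              pow_rpow two_pos k β, zpow_rpow hsq2 j β, ← hvdef]
          have hX2 : (C ^ 2 * d₂ * P j * G k * Cstar ^ k) * (2 ^ β * (2 ^ k * ρf j) ^ β) =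
              (c0 * 2 ^ β * r ^ β * (P j * v ^ j)) *
                ((Cstar * 2 ^ β) ^ k * Real.exp (-(δ * 4 ^ k))) := by
            rw [hrw]
            simp only [hGdef, hc0def]
            rw [mul_pow]
            ring
          rw [← hX2]
          exact add_le_add hX1 le_rfl
        calc ENNReal.ofReal (m j k) * volume (ball x (2 ^ k * ρf j))
            ≤ ENNReal.ofReal (m j k) * (ENNReal.ofReal Cstar ^ k * Wf j) :=
              mul_le_mul_right hvol _
          _ = ENNReal.ofReal (m j k) * ENNReal.ofReal ((Wf j).toReal) *
                ENNReal.ofReal (Cstar ^ k) := by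
              rw [← ENNReal.ofReal_pow hCs0, ENNReal.ofReal_toReal (hWtop j)]
              ring
          _ = ENNReal.ofReal (m j k * (Wf j).toReal * Cstar ^ k) := by
              rw [← ENNReal.ofReal_mul (hm0 j k),
                ← ENNReal.ofReal_mul (mul_nonneg (hm0 j k) ENNReal.toReal_nonneg)]
          _ ≤ _ := by
              rw [← ENNReal.ofReal_add ht1 ht2]
              exact ENNReal.ofReal_le_ofReal hreal
      -- sum it all up
      refine hLle.trans ?_
      calc ∑' j : ℤ, ∑' k : ℕ, ENNReal.ofReal (m j k) * volume (ball x (2 ^ k * ρf j))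
          ≤ ∑' j : ℤ, ∑' k : ℕ,
              (ENNReal.ofReal ((c0 * (1 + 2 ^ β * A) * P j) *
                ((Cstar * 2 ^ β) ^ k * Real.exp (-(δ * 4 ^ k)))) +
              ENNReal.ofReal ((c0 * 2 ^ β * r ^ β * (P j * v ^ j)) *
                ((Cstar * 2 ^ β) ^ k * Real.exp (-(δ * 4 ^ k))))) :=
            ENNReal.tsum_le_tsum (fun j => ENNReal.tsum_le_tsum (fun k => hjk j k))
        _ = ∑' j : ℤ, (ENNReal.ofReal (c0 * (1 + 2 ^ β * A) * P j) * ENNReal.ofReal K +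
              ENNReal.ofReal (c0 * 2 ^ β * r ^ β * (P j * v ^ j)) * ENNReal.ofReal K) := by
            refine tsum_congr (fun j => ?_)
            rw [ENNReal.tsum_add]
            congr 1
            · calc ∑' k : ℕ, ENNReal.ofReal ((c0 * (1 + 2 ^ β * A) * P j) *
                    ((Cstar * 2 ^ β) ^ k * Real.exp (-(δ * 4 ^ k))))
                  = ∑' k : ℕ, ENNReal.ofReal (c0 * (1 + 2 ^ β * A) * P j) *
                      ENNReal.ofReal ((Cstar * 2 ^ β) ^ k * Real.exp (-(δ * 4 ^ k))) :=
                    tsum_congr (fun k =>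
                      ENNReal.ofReal_mul (mul_nonneg hc10 (hP0 j)))
                _ = ENNReal.ofReal (c0 * (1 + 2 ^ β * A) * P j) *
                      ∑' k : ℕ, ENNReal.ofReal ((Cstar * 2 ^ β) ^ k *
                        Real.exp (-(δ * 4 ^ k))) := ENNReal.tsum_mul_left
                _ = ENNReal.ofReal (c0 * (1 + 2 ^ β * A) * P j) * ENNReal.ofReal K := by
                    rw [← ENNReal.ofReal_tsum_of_nonneg hw0 hsumK, hKdef]
            · calc ∑' k : ℕ, ENNReal.ofReal ((c0 * 2 ^ β * r ^ β * (P j * v ^ j)) *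
                    ((Cstar * 2 ^ β) ^ k * Real.exp (-(δ * 4 ^ k))))
                  = ∑' k : ℕ, ENNReal.ofReal (c0 * 2 ^ β * r ^ β * (P j * v ^ j)) *
                      ENNReal.ofReal ((Cstar * 2 ^ β) ^ k * Real.exp (-(δ * 4 ^ k))) :=
                    tsum_congr (fun k => ENNReal.ofReal_mul
                      (mul_nonneg hc20 (mul_nonneg (hP0 j)
                        (zpow_nonneg (by linarith) j))))
                _ = ENNReal.ofReal (c0 * 2 ^ β * r ^ β * (P j * v ^ j)) *
                      ∑' k : ℕ, ENNReal.ofReal ((Cstar * 2 ^ β) ^ k *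
                        Real.exp (-(δ * 4 ^ k))) := ENNReal.tsum_mul_left
                _ = ENNReal.ofReal (c0 * 2 ^ β * r ^ β * (P j * v ^ j)) *
                      ENNReal.ofReal K := by
                    rw [← ENNReal.ofReal_tsum_of_nonneg hw0 hsumK, hKdef]
        _ = (∑' j : ℤ, ENNReal.ofReal (c0 * (1 + 2 ^ β * A) * P j)) * ENNReal.ofReal K +
              (∑' j : ℤ, ENNReal.ofReal (c0 * 2 ^ β * r ^ β * (P j * v ^ j))) *
                ENNReal.ofReal K := by
            rw [ENNReal.tsum_add, ENNReal.tsum_mul_right, ENNReal.tsum_mul_right]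
        _ = ENNReal.ofReal (c0 * (1 + 2 ^ β * A)) * ENNReal.ofReal J1 * ENNReal.ofReal K +
              ENNReal.ofReal (c0 * 2 ^ β * r ^ β) * ENNReal.ofReal J2 * ENNReal.ofReal K := by
            congr 2
            · calc ∑' j : ℤ, ENNReal.ofReal (c0 * (1 + 2 ^ β * A) * P j)
                  = ∑' j : ℤ, ENNReal.ofReal (c0 * (1 + 2 ^ β * A)) *
                      ENNReal.ofReal (P j) :=
                    tsum_congr (fun j => ENNReal.ofReal_mul hc10)
                _ = ENNReal.ofReal (c0 * (1 + 2 ^ β * A)) *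
                      ∑' j : ℤ, ENNReal.ofReal (P j) := ENNReal.tsum_mul_left
                _ = ENNReal.ofReal (c0 * (1 + 2 ^ β * A)) * ENNReal.ofReal J1 := by
                    congr 1
                    simp only [hPdef]
                    rw [← ENNReal.ofReal_tsum_of_nonneg hPj0 hsumJ1, hJ1def]
            · calc ∑' j : ℤ, ENNReal.ofReal (c0 * 2 ^ β * r ^ β * (P j * v ^ j))
                  = ∑' j : ℤ, ENNReal.ofReal (c0 * 2 ^ β * r ^ β) *
                      ENNReal.ofReal (P j * v ^ j) :=
                    tsum_congr (fun j => ENNReal.ofReal_mul hc20)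
                _ = ENNReal.ofReal (c0 * 2 ^ β * r ^ β) *
                      ∑' j : ℤ, ENNReal.ofReal (P j * v ^ j) := ENNReal.tsum_mul_left
                _ = ENNReal.ofReal (c0 * 2 ^ β * r ^ β) * ENNReal.ofReal J2 := by
                    congr 1
                    have hPv : ∀ j : ℤ, P j * v ^ j =
                        (v / b) ^ j * Real.exp (-(b ^ (-(j + 1)))) := by
                      intro j
                      simp only [hPdef]
                      have : (1 / b : ℝ) ^ j * v ^ j = (v / b) ^ j := by
                        rw [← mul_zpow, one_div, inv_mul_eq_div]
                      rw [← this]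
                      ring
                    simp only [hPv]
                    rw [← ENNReal.ofReal_tsum_of_nonneg hPv0 hsumJ2, hJ2def]
        _ = ENNReal.ofReal (c0 * (1 + 2 ^ β * A) * J1 * K) +
              ENNReal.ofReal (c0 * 2 ^ β * r ^ β * J2 * K) := by
            rw [← ENNReal.ofReal_mul hc10, ← ENNReal.ofReal_mul (mul_nonneg hc10 hJ10),
              ← ENNReal.ofReal_mul hc20, ← ENNReal.ofReal_mul (mul_nonneg hc20 hJ20)]

    -- conclude
    have habs : |u t x| ≤ (∫⁻ y, ENNReal.ofReal |pα t x y * u0 y|).toReal := by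
      rw [hu t ht x, ← Real.norm_eq_abs]
      simpa only [Real.norm_eq_abs] using
        norm_integral_le_lintegral_norm (μ := (volume : Measure M))
          (fun y => pα t x y * u0 y)
    have hS10 : 0 ≤ c0 * (1 + 2 ^ β * A) * J1 * K := by
      have : (0:ℝ) ≤ 1 + 2 ^ β * A := by
        have := mul_nonneg h2βpos.le hApos
        linarith
      have h2 : 0 ≤ c0 * (1 + 2 ^ β * A) := mul_nonneg hc00.le this
      exact mul_nonneg (mul_nonneg h2 hJ10) hK0
    have hS20 : 0 ≤ c0 * 2 ^ β * r ^ β * J2 * K := by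
      have h1 : (0:ℝ) ≤ r ^ β := Real.rpow_nonneg hr.le β
      exact mul_nonneg (mul_nonneg (mul_nonneg (by positivity) h1) hJ20) hK0
    have hfin2 : |u t x| ≤ c0 * (1 + 2 ^ β * A) * J1 * K + c0 * 2 ^ β * r ^ β * J2 * K := by
      refine habs.trans ?_
      refine ENNReal.toReal_le_of_le_ofReal (by linarith) ?_
      rw [ENNReal.ofReal_add hS10 hS20]
      exact hfinal
    refine hfin2.trans ?_
    rw [← hrβ]
    have hb1' : 1 + 2 ^ β * A ≤ 2 ^ β * (1 + A) := by
      rw [mul_add, mul_one]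
      linarith
    have hsplit : c0 * 2 ^ β * (K * J1 + K * J2) =
        c0 * 2 ^ β * (J1 * K) + c0 * 2 ^ β * (J2 * K) := by ring
    have hpos1 : 0 ≤ c0 * 2 ^ β * (J1 * K) :=
      mul_nonneg (by positivity) (mul_nonneg hJ10 hK0)
    have hpos2 : 0 ≤ c0 * 2 ^ β * (J2 * K) :=
      mul_nonneg (by positivity) (mul_nonneg hJ20 hK0)
    have hKJ1 : c0 * 2 ^ β * (J1 * K) ≤ C' := by
      rw [hC'def, hsplit]; linarith
    have hKJ2 : c0 * 2 ^ β * (J2 * K) ≤ C' := by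
      rw [hC'def, hsplit]; linarith
    have hrβ0 : (0:ℝ) ≤ r ^ β := Real.rpow_nonneg hr.le β
    have h1A : (0:ℝ) ≤ 1 + A := by linarith
    have hterm1 : c0 * (1 + 2 ^ β * A) * J1 * K ≤ C' * (1 + A) := by
      calc c0 * (1 + 2 ^ β * A) * J1 * K = (c0 * (1 + 2 ^ β * A)) * (J1 * K) := by ring
        _ ≤ (c0 * (2 ^ β * (1 + A))) * (J1 * K) :=
            mul_le_mul_of_nonneg_right (mul_le_mul_of_nonneg_left hb1' hc00.le)
              (mul_nonneg hJ10 hK0)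
        _ = c0 * (2 ^ β * (1 + A)) * J1 * K := by ring
        _ = (c0 * 2 ^ β * (J1 * K)) * (1 + A) := by ring
        _ ≤ C' * (1 + A) := mul_le_mul_of_nonneg_right hKJ1 h1A
    have hterm2 : c0 * 2 ^ β * r ^ β * J2 * K ≤ C' * r ^ β := by
      calc c0 * 2 ^ β * r ^ β * J2 * K = (c0 * 2 ^ β * (J2 * K)) * r ^ β := by ring
        _ ≤ C' * r ^ β := mul_le_mul_of_nonneg_right hKJ2 hrβ0
    linarith
end
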